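/- arXiv:math/0604471 — 9 statements merged into one kernel-verified Lean document; each statement's English description precedes it below -/
import Mathlib

section
/- For all integers n ≥ 1, k ≥ 2 and j ≥ 1, the natural number n divides j·C(kn, n+j); that is, (j/n)·C(kn, n+j) is always an integer. -/
/-!
The absorption identity `(n + j) * C(kn, n + j) = kn * C(kn - 1, n + j - 1)` makes
`(n + j) * C(kn, n + j)` a multiple of `n`; subtracting `n * C(kn, n + j)` leaves `j * C(kn, n + j)`.
-/

namespace Nat

theorem dvd_mul_choose_self (N r : ℕ) : N ∣ r * N.choose r := by
  rcases r with _ | r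
  · simp
  rcases N with _ | N
  · simp
  exact ⟨N.choose r, by rw [mul_comm, ← add_one_mul_choose_eq]⟩

theorem dvd_mul_choose_of_dvd {d N : ℕ} (hd : d ∣ N) (r : ℕ) : d ∣ r * N.choose r :=
  hd.trans (dvd_mul_choose_self N r)

end Nat

theorem stmt_1_general (n k j : ℕ) :
    n ∣ j * Nat.choose (k * n) (n + j) := by
  have hsum : n ∣ (n + j) * (k * n).choose (n + j) :=
    Nat.dvd_mul_choose_of_dvd (dvd_mul_left n k) (n + j)
  rw [add_mul] at hsum
  exact (Nat.dvd_add_right (dvd_mul_right n _)).mp hsum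

/-- For all integers n ≥ 1, k ≥ 2 and j ≥ 1, n divides j·C(kn, n+j);
that is, (j/n)·C(kn, n+j) is always an integer. -/
theorem stmt_1 (n k j : ℕ) (hn : 1 ≤ n) (hk : 2 ≤ k) (hj : 1 ≤ j) :
    n ∣ j * Nat.choose (k * n) (n + j) :=
  stmt_1_general n k j
end

section
/- Let n ≥ 1 and k ≥ 2 be integers and let f : Fin(kn) → ℤ be a path in 𝒫_{n,k}. If 0 ≤ i ≤ n and the k-divisible point ik of f lies on the baseline, i.e. n·S(f, ik) = i·(2 − (k−2)·n), then i = 0 or i = n. -/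
/-- The height of the path `f` at point `m`: the partial sum `S(f, m) = Σ_{t < m} f(t)`. -/
def pathSum {N : ℕ} (f : Fin N → ℤ) (m : ℕ) : ℤ :=
  ∑ t ∈ Finset.univ.filter (fun t : Fin N => (t : ℕ) < m), f t

/-- A path in 𝒫_{n,k}: a function `f : Fin (k*n) → ℤ` with all values in {1, −1}
and exactly `n+1` values equal to 1. -/
def IsPathP (n k : ℕ) (f : Fin (k * n) → ℤ) : Prop :=
  (∀ t, f t = 1 ∨ f t = -1) ∧
    (Finset.univ.filter (fun t : Fin (k * n) => f t = 1)).card = n + 1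

lemma sum_pm {N : ℕ} (f : Fin N → ℤ) (h : ∀ t, f t = 1 ∨ f t = -1)
    (A : Finset (Fin N)) :
    ∑ t ∈ A, f t = 2 * (A.filter (fun t => f t = 1)).card - A.card := by
  classical
  rw [← Finset.sum_filter_add_sum_filter_not A (fun t => f t = 1)]
  have h1 : ∑ t ∈ A.filter (fun t => f t = 1), f t
      = ((A.filter (fun t => f t = 1)).card : ℤ) := by
    rw [Finset.sum_congr rfl (fun t ht => (Finset.mem_filter.1 ht).2)]
    simp
  have h2 : ∑ t ∈ A.filter (fun t => ¬ f t = 1), f t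
      = -((A.filter (fun t => ¬ f t = 1)).card : ℤ) := by
    rw [Finset.sum_congr rfl (fun t ht => ((h t).resolve_left (Finset.mem_filter.1 ht).2))]
    simp
  rw [h1, h2]
  have := Finset.card_filter_add_card_filter_not (s := A) (p := fun t => f t = 1)
  omega

/-- if the k-divisible point `i*k` of a path `f ∈ 𝒫_{n,k}` (with `0 ≤ i ≤ n`)
lies on the baseline, i.e. `n·S(f, i*k) = i·(2 − (k−2)·n)`, then `i = 0` or `i = n`. -/
theorem stmt_2 (n k : ℕ) (hn : 1 ≤ n) (hk : 2 ≤ k) (f : Fin (k * n) → ℤ)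
    (hf : IsPathP n k f) (i : ℕ) (hi : i ≤ n)
    (hline : (n : ℤ) * pathSum f (i * k) = (i : ℤ) * (2 - ((k : ℤ) - 2) * (n : ℤ))) :
    i = 0 ∨ i = n := by
  classical
  set A := Finset.univ.filter (fun t : Fin (k * n) => (t : ℕ) < i * k) with hA
  have hcard : A.card = i * k := by
    rw [hA]
    rw [show (Finset.univ.filter (fun t : Fin (k * n) => (t : ℕ) < i * k))
        = (Finset.range (i * k)).attachFin (fun m hm => lt_of_lt_of_le
            (Finset.mem_range.1 hm) (by nlinarith)) from ?_]
    · rw [Finset.card_attachFin, Finset.card_range]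
    · ext t
      simp [Finset.mem_attachFin]
  have hsum : pathSum f (i * k)
      = 2 * (A.filter (fun t => f t = 1)).card - (i * k : ℕ) := by
    rw [pathSum, ← hA, sum_pm f hf.1 A, hcard]
  set p := (A.filter (fun t => f t = 1)).card with hp
  -- derive n * p = i * (n+1)
  have key : n * p = i * (n + 1) := by
    have : (n : ℤ) * p = i * (n + 1) := by
      rw [hsum] at hline
      push_cast at hline ⊢
      nlinarith [hline]
    exact_mod_cast this
  have hc : Nat.Coprime n (n + 1) := by simp
  have hdvd : n ∣ i := Nat.Coprime.dvd_of_dvd_mul_right hc ⟨p, key.symm⟩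
  rcases Nat.eq_zero_or_pos i with h0 | hpos
  · exact Or.inl h0
  · right
    have := Nat.le_of_dvd hpos hdvd
    omega
end

section
/- Let n ≥ 1 and k ≥ 2 be integers. For every i with 0 ≤ i ≤ n−1, the number of paths f in 𝒫_{n,k} with X(f) = i, multiplied by n, equals C(kn, n+1). In particular the statistic X is uniformly distributed over {0, 1, …, n−1} on 𝒫_{n,k}. -/
/-- The statistic `X`: the number of interior k-divisible points of `f` lying strictly
above the baseline, i.e. the number of `m` with `0 < m < k*n`, `k ∣ m`, and
`k*n·S(f, m) > m·(2 − (k−2)·n)`. -/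
def statX (n k : ℕ) (f : Fin (k * n) → ℤ) : ℕ :=
  ((Finset.range (k * n)).filter (fun m => 0 < m ∧ k ∣ m ∧
    ((k * n : ℕ) : ℤ) * pathSum f m > (m : ℤ) * (2 - ((k : ℤ) - 2) * (n : ℤ)))).card

open Finset Function in
lemma Fin.existsUnique_card_filter_lt_eq {m : ℕ} {β : Type*} [LinearOrder β] {V : Fin m → β}
    (hV : Injective V) {i : ℕ} (hi : i < m) : ∃! j, #{l | V j < V l} = i := by
  have hlt (j : Fin m) : #{l | V j < V l} < m := by
    refine (card_lt_card ?_).trans_eq (card_fin m)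
    exact filter_ssubset.2 ⟨j, mem_univ _, lt_irrefl _⟩
  have hanti {a b : Fin m} (h : V a < V b) : #{l | V b < V l} < #{l | V a < V l} :=
    card_lt_card <| (ssubset_iff_of_subset fun l hl => by simp_all [h.trans]).2
      ⟨b, by simp [h], by simp⟩
  have hrank : Injective fun j => (⟨#{l | V j < V l}, hlt j⟩ : Fin m) := fun a b hab => by
    by_contra hne
    rcases lt_or_gt_of_ne (hV.ne hne) with h | h
    · exact (hanti h).ne' (congrArg Fin.val hab)
    · exact (hanti h).ne (congrArg Fin.val hab)
  obtain ⟨j, hj, huniq⟩ := (Finite.injective_iff_bijective.1 hrank).existsUnique ⟨i, hi⟩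
  exact ⟨j, congrArg Fin.val hj, fun j' hj' => huniq j' (Fin.ext hj')⟩

noncomputable def Equiv.sigmaSubtypeOfExistsUnique {ι α : Type*} {p : α → Prop} {q : ι → α → Prop}
    (h : ∀ a, p a → ∃! j, q j a) : (Σ j, {a // p a ∧ q j a}) ≃ {a // p a} where
  toFun x := ⟨x.2, x.2.2.1⟩
  invFun a := ⟨(h a a.2).exists.choose, a, a.2, (h a a.2).exists.choose_spec⟩
  left_inv x :=
    Sigma.subtype_ext ((h x.2 x.2.2.1).unique (h x.2 x.2.2.1).exists.choose_spec x.2.2.2) rfl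
  right_inv _ := rfl

namespace LatticePath

open Finset Fin.NatCast Function

section Cyclic

variable {N : ℕ} [NeZero N]

def rotate {α : Type*} (s : ℕ) : (Fin N → α) ≃ (Fin N → α) :=
  (Equiv.addRight (s : Fin N)).symm.arrowCongr (Equiv.refl α)

@[simp]
lemma rotate_apply {α : Type*} (s : ℕ) (f : Fin N → α) (t : Fin N) :
    rotate s f t = f (t + s) := rfl

/-- The height at `m` of the `N`-periodic extension of `f` (the cast `ℕ → Fin N` wraps around). -/
def height (f : Fin N → ℤ) (m : ℕ) : ℤ := ∑ t ∈ range m, f t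

variable (f : Fin N → ℤ)

lemma height_add (s m : ℕ) : height f (s + m) = height f s + height (rotate s f) m := by
  simp [height, sum_range_add, add_comm]

lemma height_eq_sum : height f N = ∑ t, f t := by
  rw [height, ← Fin.sum_univ_eq_sum_range]
  simp

lemma height_rotate_period (s : ℕ) : height (rotate s f) N = height f N := by
  simp only [height_eq_sum, rotate_apply]
  exact Equiv.sum_comp (Equiv.addRight (s : Fin N)) f

lemma pathSum_eq_height {m : ℕ} (hm : m ≤ N) : pathSum f m = height f m := by
  have hrange : (range N).filter (· < m) = range m := by
    ext t
    simp only [mem_filter, mem_range]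
    omega
  calc pathSum f m = ∑ t : Fin N, if (t : ℕ) < m then f ((t : ℕ) : Fin N) else 0 := by
        simp [pathSum, sum_filter]
    _ = height f m := by
        rw [Fin.sum_univ_eq_sum_range (fun t => if t < m then f t else 0), ← sum_filter,
          hrange, height]

lemma height_modEq_two {f : Fin N → ℤ} (hf : ∀ t, f t = 1 ∨ f t = -1) (m : ℕ) :
    height f m ≡ m [ZMOD 2] := by
  induction m with
  | zero => rfl
  | succ m ih =>
    rw [height, sum_range_succ, ← height, Nat.cast_succ]
    refine ih.add ?_
    rcases hf m with h | h <;> simp [h, Int.ModEq]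

/-- `N` times the signed vertical distance of the point at `m` above the baseline, the line
through the origin with slope `height f N / N`. -/
def excess (f : Fin N → ℤ) (m : ℕ) : ℤ := N * height f m - m * height f N

@[simp]
lemma excess_zero : excess f 0 = 0 := by
  simp [excess, height]

lemma excess_rotate (s m : ℕ) : excess (rotate s f) m = excess f (s + m) - excess f s := by
  simp only [excess, height_rotate_period, height_add f s m]
  push_cast
  ring

lemma excess_periodic : Periodic (excess f) N := fun m => by
  have h := excess_rotate f m N
  rw [excess, sub_self] at h
  linarith

end Cyclic

end LatticePath

section Path

open Finset Fin.NatCast Function LatticePath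

lemma isPathP_comp_perm {n k : ℕ} {f : Fin (k * n) → ℤ} (σ : Equiv.Perm (Fin (k * n))) :
    IsPathP n k (f ∘ σ) ↔ IsPathP n k f := by
  refine and_congr ⟨fun h t => by simpa using h (σ.symm t), fun h t => h (σ t)⟩ ?_
  rw [card_equiv σ (t := {t | f t = 1}) fun t => by simp]

variable {n k : ℕ} [NeZero n] [NeZero k] {f : Fin (k * n) → ℤ}

lemma isPathP_rotate (s : ℕ) : IsPathP n k (rotate s f) ↔ IsPathP n k f :=
  isPathP_comp_perm (Equiv.addRight (s : Fin (k * n)))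

lemma IsPathP.height_period (hf : IsPathP n k f) : height f (k * n) = 2 - (k - 2) * n := by
  have hpm (t : Fin (k * n)) : f t = 2 * (if f t = 1 then 1 else 0) - 1 := by
    rcases hf.1 t with h | h <;> simp [h]
  rw [height_eq_sum, sum_congr rfl fun t _ => hpm t, sum_sub_distrib, ← mul_sum, sum_boole, hf.2]
  simp only [Nat.cast_add, Nat.cast_one, sum_const, card_univ, Fintype.card_fin,
    Int.nsmul_eq_mul, Nat.cast_mul, mul_one]
  ring

lemma IsPathP.statX_eq (hf : IsPathP n k f) :
    statX n k f = #{c : Fin n | 0 < excess f (c * k)} := by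
  have hk : 0 < k := Nat.pos_of_neZero k
  have hpos {m : ℕ} (hm : m ≤ k * n) : ((k * n : ℕ) : ℤ) * pathSum f m >
      (m : ℤ) * (2 - ((k : ℤ) - 2) * (n : ℤ)) ↔ 0 < excess f m := by
    rw [excess, pathSum_eq_height f hm, hf.height_period, gt_iff_lt, sub_pos]
  symm
  refine card_nbij (fun c => c * k) ?_ ?_ ?_
  · intro c hc
    simp only [mem_coe, mem_filter, mem_univ, true_and] at hc
    have hck : (c : ℕ) * k < k * n := by
      rw [mul_comm k]
      exact Nat.mul_lt_mul_of_pos_right c.isLt hk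
    have hc0 : (c : ℕ) ≠ 0 := by rintro h; simp [h] at hc
    rw [mem_coe, mem_filter, mem_range]
    exact ⟨hck, by positivity, dvd_mul_left k c, (hpos hck.le).2 hc⟩
  · intro a _ b _ hab
    exact Fin.ext (Nat.eq_of_mul_eq_mul_right hk hab)
  · intro m hm
    simp only [mem_coe, mem_filter, mem_range] at hm
    obtain ⟨hmN, -, ⟨c, rfl⟩, habove⟩ := hm
    have hc : c < n := by nlinarith
    exact ⟨⟨c, hc⟩, by simpa [mul_comm] using (hpos hmN.le).1 habove, mul_comm c k⟩

lemma IsPathP.statX_rotate (hf : IsPathP n k f) (j : Fin n) :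
    statX n k (rotate (j * k) f) = #{l : Fin n | excess f (j * k) < excess f (l * k)} := by
  have hper : Periodic (fun l => excess f (l * k)) n := fun l => by
    simpa [add_mul, mul_comm n k] using excess_periodic f (l * k)
  have hshift (c : Fin n) : excess f (((j + c : Fin n) : ℕ) * k) = excess f (j * k + c * k) := by
    rw [Fin.val_add, ← add_mul]
    exact hper.map_mod_nat _
  rw [((isPathP_rotate _).2 hf).statX_eq]
  refine card_equiv (Equiv.addLeft j) fun c => ?_
  simp [excess_rotate, hshift]

lemma IsPathP.injective_excess (hf : IsPathP n k f) :
    Injective fun l : Fin n => excess f (l * k) := by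
  refine Injective.of_lt_imp_ne fun a b hab heq => ?_
  have hd : 0 < (b - a : ℤ) ∧ (b - a : ℤ) < n := by
    have := b.isLt
    have : (a : ℕ) < b := hab
    omega
  have hbal : (n : ℤ) * (height f (b * k) - height f (a * k)) = (b - a) * (2 - (k - 2) * n) := by
    have hk : (k : ℤ) ≠ 0 := by exact_mod_cast NeZero.ne k
    apply mul_left_cancel₀ hk
    simp only [excess, hf.height_period] at heq
    push_cast at heq
    linear_combination -heq
  have hpar : height f (b * k) - height f (a * k) ≡ (b - a) * k [ZMOD 2] := by
    have := (height_modEq_two hf.1 (b * k)).sub (height_modEq_two hf.1 (a * k))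
    push_cast at this
    rwa [← sub_mul] at this
  -- With `Δ ≡ (b - a) k` and `T = 2 - (k - 2) n`, the balance `n Δ = (b - a) T` forces `n ∣ b - a`.
  generalize height f (b * k) - height f (a * k) = Δ at hbal hpar
  obtain ⟨e, he⟩ := hpar.dvd
  have hdvd : (n : ℤ) ∣ b - a := ⟨(b - a) * k - e - (b - a), by
    have : 2 * ((b : ℤ) - a) = 2 * (n * ((b - a) * k - e - (b - a))) := by
      linear_combination -hbal - n * he
    linarith⟩
  exact absurd (Int.le_of_dvd hd.1 hdvd) (not_le.2 hd.2)

lemma IsPathP.existsUnique_statX_rotate (hf : IsPathP n k f) {i : ℕ} (hi : i < n) :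
    ∃! j : Fin n, statX n k (rotate (j * k) f) = i := by
  simpa only [hf.statX_rotate] using Fin.existsUnique_card_filter_lt_eq hf.injective_excess hi

end Path

open Finset in
def IsPathP.equivUpsteps (n k : ℕ) :
    {f : Fin (k * n) → ℤ // IsPathP n k f} ≃ {s : Finset (Fin (k * n)) // #s = n + 1} where
  toFun f := ⟨({t | f.1 t = 1} : Finset _), f.2.2⟩
  invFun s := ⟨fun t => if t ∈ s.1 then 1 else -1, fun t => by by_cases t ∈ s.1 <;> simp [*],
    by simpa using s.2⟩
  left_inv f := Subtype.ext <| funext fun t => by rcases f.2.1 t with h | h <;> simp [h]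
  right_inv s := Subtype.ext <| by ext t; simp

lemma IsPathP.card (n k : ℕ) :
    Nat.card {f : Fin (k * n) → ℤ // IsPathP n k f} = (k * n).choose (n + 1) := by
  rw [Nat.card_congr (IsPathP.equivUpsteps n k), Nat.card_eq_fintype_card, Fintype.card_finset_len,
    Fintype.card_fin]

open LatticePath in
/-- for every `i` with `0 ≤ i ≤ n−1`, the number of paths `f ∈ 𝒫_{n,k}`
with `X(f) = i`, multiplied by `n`, equals `C(kn, n+1)`; i.e. `X` is uniformly
distributed over `{0, 1, …, n−1}`. -/
theorem stmt_3 (n k : ℕ) (hn : 1 ≤ n) (hk : 2 ≤ k) (i : ℕ) (hi : i ≤ n - 1) :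
    n * Nat.card {f : Fin (k * n) → ℤ // IsPathP n k f ∧ statX n k f = i} =
      Nat.choose (k * n) (n + 1) := by
  have : NeZero n := ⟨by omega⟩
  have : NeZero k := ⟨by omega⟩
  let fiber (j : Fin n) :=
    {f : Fin (k * n) → ℤ // IsPathP n k f ∧ statX n k (rotate (j * k) f) = i}
  have fiberEquiv (j : Fin n) : fiber j ≃ {f // IsPathP n k f ∧ statX n k f = i} :=
    (rotate (j * k)).subtypeEquiv fun f => by rw [isPathP_rotate]
  calc n * Nat.card {f // IsPathP n k f ∧ statX n k f = i}
      = Nat.card (Σ j, fiber j) := by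
        rw [Nat.card_congr ((Equiv.sigmaCongrRight fiberEquiv).trans (Equiv.sigmaEquivProd _ _)),
          Nat.card_prod, Nat.card_fin]
    _ = Nat.card {f // IsPathP n k f} := Nat.card_congr <|
        Equiv.sigmaSubtypeOfExistsUnique fun f hf => hf.existsUnique_statX_rotate (by omega)
    _ = (k * n).choose (n + 1) := IsPathP.card n k
end

section
/- Let n ≥ 1 and k ≥ 2 be integers. Then n times the number of paths f in 𝒫_{n,k} all of whose interior k-divisible points lie strictly above the baseline (i.e. kn·S(f, m) > m·(2−(k−2)n) for every m with 0 < m < kn and k ∣ m) equals C(kn, n+1); that is, this number of paths is (1/n)·C(kn, n+1). -/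
namespace Stmt4Aux

variable {N : ℕ}

/-- periodic extension of `f` to all of `ℕ`. -/
def wrapF (f : Fin N → ℤ) (t : ℕ) : ℤ :=
  if h : t % N < N then f ⟨t % N, h⟩ else 0

/-- prefix sums of the periodic extension. -/
def SS (f : Fin N → ℤ) (m : ℕ) : ℤ := ∑ t ∈ Finset.range m, wrapF f t

/-- cyclic rotation of a path. -/
def rot (c : ℕ) (f : Fin N → ℤ) : Fin N → ℤ := fun t => wrapF f (c + t)

lemma wrapF_coe (f : Fin N → ℤ) (t : Fin N) : wrapF f t = f t := by
  simp [wrapF, Nat.mod_eq_of_lt t.isLt]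

lemma wrapF_congr (f : Fin N → ℤ) {a b : ℕ} (h : a % N = b % N) : wrapF f a = wrapF f b := by
  simp only [wrapF, h]

lemma wrapF_period (f : Fin N → ℤ) (t : ℕ) : wrapF f (t + N) = wrapF f t :=
  wrapF_congr f (Nat.add_mod_right t N)

lemma wrapF_rot (c : ℕ) (f : Fin N → ℤ) (t : ℕ) :
    wrapF (rot c f) t = wrapF f (c + t) := by
  by_cases h : t % N < N
  · have h1 : wrapF (rot c f) t = rot c f ⟨t % N, h⟩ := dif_pos h
    rw [h1]
    show wrapF f (c + t % N) = wrapF f (c + t)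
    exact wrapF_congr f (by
      rw [Nat.add_mod, Nat.mod_mod_of_dvd _ dvd_rfl, ← Nat.add_mod])
  · have hN : N = 0 := by
      rcases Nat.eq_zero_or_pos N with h0 | h0
      · exact h0
      · exact absurd (Nat.mod_lt t h0) h
    subst hN
    simp [wrapF]

lemma SS_succ (f : Fin N → ℤ) (m : ℕ) : SS f (m + 1) = SS f m + wrapF f m :=
  Finset.sum_range_succ _ _

lemma SS_period (f : Fin N → ℤ) (m : ℕ) : SS f (m + N) = SS f m + SS f N := by
  induction m with
  | zero => simp [SS]
  | succ m ih =>
    have h1 : m + 1 + N = (m + N) + 1 := by omega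
    rw [h1, SS_succ, ih, wrapF_period, SS_succ]; ring

lemma SS_rot (c : ℕ) (f : Fin N → ℤ) (m : ℕ) :
    SS (rot c f) m = SS f (c + m) - SS f c := by
  induction m with
  | zero => simp [SS]
  | succ m ih =>
    rw [SS_succ, ih, wrapF_rot, show c + (m + 1) = (c + m) + 1 from rfl, SS_succ]; ring

lemma rot_rot (c d : ℕ) (f : Fin N → ℤ) : rot c (rot d f) = rot (d + c) f := by
  funext t
  show wrapF (rot d f) (c + t) = wrapF f (d + c + t)
  rw [wrapF_rot]
  congr 1
  omega

lemma rot_congr (f : Fin N → ℤ) {a b : ℕ} (h : a % N = b % N) : rot a f = rot b f := by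
  funext t
  exact wrapF_congr f (by rw [Nat.add_mod, h, ← Nat.add_mod])

lemma rot_zero (f : Fin N → ℤ) : rot 0 f = f := by
  funext t
  show wrapF f (0 + t) = f t
  rw [Nat.zero_add, wrapF_coe]

lemma rot_dvd (f : Fin N → ℤ) {a : ℕ} (h : N ∣ a) : rot a f = f := by
  obtain ⟨q, rfl⟩ := h
  rw [rot_congr f (a := N * q) (b := 0) (by simp [Nat.mul_mod_right]), rot_zero]


lemma SS_parity {f : Fin N → ℤ} (hv : ∀ t, f t = 1 ∨ f t = -1) (hN : 0 < N) (m : ℕ) :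
    (2 : ℤ) ∣ SS f m - (m : ℤ) := by
  induction m with
  | zero => simp [SS]
  | succ m ih =>
    have h1 : SS f (m + 1) = SS f m + wrapF f m := SS_succ f m
    have h2 : wrapF f m = f ⟨m % N, Nat.mod_lt m hN⟩ := dif_pos _
    have h3 := hv ⟨m % N, Nat.mod_lt m hN⟩
    rw [← h2] at h3
    push_cast
    omega

section NK

variable {n k : ℕ}

/-- the discrepancy function at multiples of `k`. -/
def Gg (n k : ℕ) (f : Fin (k * n) → ℤ) (l : ℕ) : ℤ :=
  (n : ℤ) * SS f (l * k) - (l : ℤ) * (2 - ((k : ℤ) - 2) * (n : ℤ))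

lemma SS_total (hn : 1 ≤ n) (hk : 2 ≤ k) {f : Fin (k * n) → ℤ} (hf : IsPathP n k f) :
    SS f (k * n) = 2 - ((k : ℤ) - 2) * (n : ℤ) := by
  classical
  have hle : n + 1 ≤ k * n := by
    have h2 : 2 * n ≤ k * n := Nat.mul_le_mul_right n hk
    omega
  have h0 : SS f (k * n) = ∑ t : Fin (k * n), f t := by
    rw [SS, ← Fin.sum_univ_eq_sum_range (fun t => wrapF f t) (k * n)]
    exact Finset.sum_congr rfl (fun t _ => wrapF_coe f t)
  have hcard : (Finset.univ.filter (fun t : Fin (k * n) => ¬ f t = 1)).card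
      = k * n - (n + 1) := by
    have := Finset.card_filter_add_card_filter_not
      (s := (Finset.univ : Finset (Fin (k * n)))) (p := fun t => f t = 1)
    rw [hf.2] at this
    simp only [Finset.card_univ, Fintype.card_fin] at this
    omega
  have hsplit := Finset.sum_filter_add_sum_filter_not
    (Finset.univ : Finset (Fin (k * n))) (fun t => f t = 1) f
  have h1 : ∑ t ∈ Finset.univ.filter (fun t : Fin (k * n) => f t = 1), f t
      = ((n : ℤ) + 1) := by
    rw [Finset.sum_congr rfl (fun t ht => (Finset.mem_filter.1 ht).2), Finset.sum_const, hf.2]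
    push_cast
    ring
  have h2 : ∑ t ∈ Finset.univ.filter (fun t : Fin (k * n) => ¬ f t = 1), f t
      = -(((k * n - (n + 1) : ℕ) : ℤ)) := by
    have hval : ∀ t ∈ Finset.univ.filter (fun t : Fin (k * n) => ¬ f t = 1), f t = -1 :=
      fun t ht => (hf.1 t).resolve_left (Finset.mem_filter.1 ht).2
    rw [Finset.sum_congr rfl hval, Finset.sum_const, hcard]
    simp
  rw [h0, ← hsplit, h1, h2, Nat.cast_sub hle]
  push_cast
  ring

lemma Gg_period (hn : 1 ≤ n) (hk : 2 ≤ k) {f : Fin (k * n) → ℤ} (hf : IsPathP n k f)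
    (l : ℕ) : Gg n k f (l + n) = Gg n k f l := by
  have h1 : (l + n) * k = l * k + k * n := by ring
  rw [Gg, Gg, h1, SS_period, SS_total hn hk hf]
  push_cast
  ring

lemma Gg_add_mul (hn : 1 ≤ n) (hk : 2 ≤ k) {f : Fin (k * n) → ℤ} (hf : IsPathP n k f)
    (l q : ℕ) : Gg n k f (l + q * n) = Gg n k f l := by
  induction q with
  | zero => simp
  | succ q ih =>
    have h1 : l + (q + 1) * n = (l + q * n) + n := by ring
    rw [h1, Gg_period hn hk hf, ih]

lemma Gg_mod (hn : 1 ≤ n) (hk : 2 ≤ k) {f : Fin (k * n) → ℤ} (hf : IsPathP n k f)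
    (l : ℕ) : Gg n k f l = Gg n k f (l % n) := by
  conv_lhs => rw [← Nat.mod_add_div l n]
  rw [show l % n + n * (l / n) = l % n + (l / n) * n by ring]
  exact Gg_add_mul hn hk hf _ _

lemma Gg_inj (hn : 1 ≤ n) (hk : 2 ≤ k) {f : Fin (k * n) → ℤ} (hf : IsPathP n k f)
    {i j : ℕ} (hij : i < j) (hj : j < n) : Gg n k f i ≠ Gg n k f j := by
  intro heq
  have hN : 0 < k * n := Nat.mul_pos (by omega) hn
  have p1 := SS_parity hf.1 hN (j * k)
  have p2 := SS_parity hf.1 hN (i * k)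
  have hn' : (0 : ℤ) < (n : ℤ) := by exact_mod_cast hn
  have hdpos : (0 : ℤ) < (j : ℤ) - (i : ℤ) := by
    have : (i : ℤ) < (j : ℤ) := by exact_mod_cast hij
    linarith
  have hdlt : (j : ℤ) - (i : ℤ) < (n : ℤ) := by
    have : (j : ℤ) < (n : ℤ) := by exact_mod_cast hj
    have : (0 : ℤ) ≤ (i : ℤ) := Int.ofNat_nonneg i
    omega
  have key : (n : ℤ) * ((SS f (j * k) - SS f (i * k)) + ((j : ℤ) - (i : ℤ)) * ((k : ℤ) - 2))
      = 2 * ((j : ℤ) - (i : ℤ)) := by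
    unfold Gg at heq
    linear_combination -heq
  set E : ℤ := (SS f (j * k) - SS f (i * k)) + ((j : ℤ) - (i : ℤ)) * ((k : ℤ) - 2) with hEdef
  have hEpos : 0 < E := by
    by_contra hc
    push_neg at hc
    have : (n : ℤ) * E ≤ 0 := mul_nonpos_of_nonneg_of_nonpos hn'.le hc
    linarith
  have hElt : E < 2 := by
    by_contra hc
    push_neg at hc
    have : (n : ℤ) * 2 ≤ (n : ℤ) * E := mul_le_mul_of_nonneg_left hc hn'.le
    linarith
  have hE1 : E = 1 := by omega
  have hD : SS f (j * k) - SS f (i * k) = 1 - ((j : ℤ) - (i : ℤ)) * ((k : ℤ) - 2) := by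
    rw [hEdef] at hE1
    linarith
  have pD : (2 : ℤ) ∣ (1 + 2 * ((j : ℤ) - (i : ℤ)) - 2 * (((j : ℤ) - (i : ℤ)) * (k : ℤ))) := by
    have hrw : 1 + 2 * ((j : ℤ) - (i : ℤ)) - 2 * (((j : ℤ) - (i : ℤ)) * (k : ℤ))
        = (SS f (j * k) - ((j * k : ℕ) : ℤ)) - (SS f (i * k) - ((i * k : ℕ) : ℤ)) := by
      push_cast
      linear_combination -hD
    rw [hrw]
    exact dvd_sub p1 p2
  obtain ⟨c, hc⟩ := pD
  have habs : ∀ a b : ℤ, 1 + 2 * a - 2 * b = 2 * c → False := by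
    intro a b h
    omega
  exact habs _ _ hc


lemma pathSum_eq_SS (f : Fin N → ℤ) {m : ℕ} (hm : m ≤ N) : pathSum f m = SS f m := by
  have h1 : ∑ t : Fin N, (if (t : ℕ) < m then f t else 0)
      = ∑ t ∈ Finset.range N, (if t < m then wrapF f t else 0) := by
    rw [← Fin.sum_univ_eq_sum_range (fun t => if t < m then wrapF f t else 0) N]
    exact Finset.sum_congr rfl (fun t _ => by rw [wrapF_coe])
  have h2 : (Finset.range N).filter (· < m) = Finset.range m := by
    ext t
    simp only [Finset.mem_filter, Finset.mem_range]
    omega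
  rw [pathSum, Finset.sum_filter, h1, ← Finset.sum_filter, h2, SS]

lemma Gg_rot {n k : ℕ} (f : Fin (k * n) → ℤ) (c j : ℕ) :
    Gg n k (rot (c * k) f) j = Gg n k f (c + j) - Gg n k f c := by
  unfold Gg
  rw [SS_rot, show c * k + j * k = (c + j) * k by ring]
  push_cast
  ring

lemma isPathP_rot {n k : ℕ} (hn : 1 ≤ n) (hk : 2 ≤ k) {f : Fin (k * n) → ℤ}
    (hf : IsPathP n k f) (c : ℕ) : IsPathP n k (rot c f) := by
  classical
  have hN : 0 < k * n := Nat.mul_pos (by omega) hn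
  haveI : NeZero (k * n) := ⟨hN.ne'⟩
  set a : Fin (k * n) := ⟨c % (k * n), Nat.mod_lt c hN⟩ with ha
  have hrot : ∀ t : Fin (k * n), rot c f t = f (a + t) := by
    intro t
    show wrapF f (c + (t : ℕ)) = f (a + t)
    have h1 : wrapF f (c + (t : ℕ)) = wrapF f ((a : ℕ) + (t : ℕ)) :=
      wrapF_congr f (by
        show (c + (t : ℕ)) % (k * n) = ((a : ℕ) + (t : ℕ)) % (k * n)
        have hav : (a : ℕ) = c % (k * n) := rfl
        rw [hav]
        conv_lhs => rw [Nat.add_mod]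
        conv_rhs => rw [Nat.add_mod, Nat.mod_mod_of_dvd c dvd_rfl])
    rw [h1]
    have h2 : wrapF f ((a : ℕ) + (t : ℕ)) = f ⟨((a : ℕ) + (t : ℕ)) % (k * n),
        Nat.mod_lt _ hN⟩ := dif_pos _
    rw [h2]
    congr 1
  constructor
  · intro t
    rw [hrot]
    exact hf.1 _
  · rw [← hf.2]
    apply Finset.card_bij (fun t _ => a + t)
    · intro t ht
      simp only [Finset.mem_filter, Finset.mem_univ, true_and] at ht ⊢
      rw [← hrot]
      exact ht
    · intro t1 h1 t2 h2 h
      exact add_left_cancel h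
    · intro s hs
      refine ⟨-a + s, ?_, by abel⟩
      simp only [Finset.mem_filter, Finset.mem_univ, true_and] at hs ⊢
      rw [hrot]
      rw [show a + (-a + s) = s by abel]
      exact hs

lemma cond_rot_iff {n k : ℕ} (hn : 1 ≤ n) (hk : 2 ≤ k) (g : Fin (k * n) → ℤ) (c : ℕ) :
    (∀ m : ℕ, 0 < m → m < k * n → k ∣ m →
        ((k * n : ℕ) : ℤ) * pathSum (rot (c * k) g) m
          > (m : ℤ) * (2 - ((k : ℤ) - 2) * (n : ℤ)))
    ↔ (∀ j : ℕ, 0 < j → j < n → Gg n k g c < Gg n k g (c + j)) := by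
  have hk0 : (0 : ℤ) < (k : ℤ) := by exact_mod_cast (by omega : 0 < k)
  constructor
  · intro h j hj0 hjn
    have hmlt : j * k < k * n := by
      rw [Nat.mul_comm j k]
      exact mul_lt_mul_of_pos_left hjn (by omega)
    have hm := h (j * k) (Nat.mul_pos hj0 (by omega)) hmlt ⟨j, Nat.mul_comm j k⟩
    rw [pathSum_eq_SS _ hmlt.le] at hm
    have hGg : Gg n k (rot (c * k) g) j = Gg n k g (c + j) - Gg n k g c := Gg_rot g c j
    have h2 : (0 : ℤ) < Gg n k (rot (c * k) g) j := by
      have h3 : (k : ℤ) * ((j : ℤ) * (2 - ((k : ℤ) - 2) * (n : ℤ)))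
          < (k : ℤ) * ((n : ℤ) * SS (rot (c * k) g) (j * k)) := by
        push_cast at hm
        linarith
      have h4 := lt_of_mul_lt_mul_left h3 hk0.le
      unfold Gg
      linarith
    rw [hGg] at h2
    linarith
  · intro h m hm0 hmN hdvd
    obtain ⟨j, rfl⟩ := hdvd
    have hj0 : 0 < j := by
      rcases Nat.eq_zero_or_pos j with h0 | h0
      · subst h0; omega
      · exact h0
    have hjn : j < n := by
      by_contra hc
      push_neg at hc
      have : k * n ≤ k * j := Nat.mul_le_mul_left k hc
      omega
    have hG := h j hj0 hjn
    have hGg : Gg n k (rot (c * k) g) j = Gg n k g (c + j) - Gg n k g c := Gg_rot g c j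
    have h2 : (0 : ℤ) < Gg n k (rot (c * k) g) j := by rw [hGg]; linarith
    unfold Gg at h2
    rw [Nat.mul_comm k j]
    rw [Nat.mul_comm k j] at hmN
    rw [pathSum_eq_SS _ hmN.le]
    have h3 := mul_pos hk0 h2
    push_cast
    push_cast at h3
    linarith

lemma min_lt_aux {n k : ℕ} (hn : 1 ≤ n) (hk : 2 ≤ k) {g : Fin (k * n) → ℤ}
    (hg : IsPathP n k g) {c c' : ℕ} (hcc' : c < c') (hc' : c' < n)
    (h1 : ∀ j, 0 < j → j < n → Gg n k g c < Gg n k g (c + j))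
    (h2 : ∀ j, 0 < j → j < n → Gg n k g c' < Gg n k g (c' + j)) : False := by
  have ha := h1 (c' - c) (by omega) (by omega)
  rw [show c + (c' - c) = c' by omega] at ha
  have hb := h2 (c + n - c') (by omega) (by omega)
  rw [show c' + (c + n - c') = c + n by omega, Gg_period hn hk hg] at hb
  linarith

lemma min_unique {n k : ℕ} (hn : 1 ≤ n) (hk : 2 ≤ k) {g : Fin (k * n) → ℤ}
    (hg : IsPathP n k g) {c c' : ℕ} (hc : c < n) (hc' : c' < n)
    (h1 : ∀ j, 0 < j → j < n → Gg n k g c < Gg n k g (c + j))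
    (h2 : ∀ j, 0 < j → j < n → Gg n k g c' < Gg n k g (c' + j)) : c = c' := by
  rcases lt_trichotomy c c' with h | h | h
  · exact (min_lt_aux hn hk hg h hc' h1 h2).elim
  · exact h
  · exact (min_lt_aux hn hk hg h hc h2 h1).elim

lemma min_exists {n k : ℕ} (hn : 1 ≤ n) (hk : 2 ≤ k) {g : Fin (k * n) → ℤ}
    (hg : IsPathP n k g) :
    ∃ c, c < n ∧ ∀ j, 0 < j → j < n → Gg n k g c < Gg n k g (c + j) := by
  obtain ⟨c, hc, hmin⟩ := Finset.exists_min_image (Finset.range n) (Gg n k g)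
    ⟨0, Finset.mem_range.2 hn⟩
  have hcn : c < n := Finset.mem_range.1 hc
  refine ⟨c, hcn, fun j hj0 hjn => ?_⟩
  rw [Gg_mod hn hk hg (c + j)]
  have hmem : (c + j) % n ∈ Finset.range n := Finset.mem_range.2 (Nat.mod_lt _ (by omega))
  have hle := hmin _ hmem
  have hne : (c + j) % n ≠ c := by
    intro hEq
    rcases Nat.lt_or_ge (c + j) n with hlt | hge
    · rw [Nat.mod_eq_of_lt hlt] at hEq; omega
    · rw [Nat.mod_eq_sub_mod hge, Nat.mod_eq_of_lt (by omega)] at hEq; omega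
  have hneq : Gg n k g c ≠ Gg n k g ((c + j) % n) := by
    rcases lt_or_gt_of_ne hne with hlt | hgt
    · exact (Gg_inj hn hk hg hlt hcn).symm
    · exact Gg_inj hn hk hg hgt (Nat.mod_lt _ (by omega))
  exact lt_of_le_of_ne hle hneq

lemma rot_inv {n k : ℕ} (hn : 1 ≤ n) (hk : 2 ≤ k) (f : Fin (k * n) → ℤ) {j : ℕ}
    (hj : j < n) : rot (((n - j) % n) * k) (rot (j * k) f) = f := by
  rw [rot_rot]
  apply rot_dvd
  rcases Nat.eq_zero_or_pos j with h0 | h0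
  · subst h0
    simp [Nat.sub_zero, Nat.mod_self]
  · have hmod : (n - j) % n = n - j := Nat.mod_eq_of_lt (by omega)
    rw [hmod]
    exact ⟨1, by rw [← Nat.add_mul, show j + (n - j) = n from by omega]; ring⟩

lemma modsub_inj {n j j' : ℕ} (hj : j < n) (hj' : j' < n)
    (h : (n - j) % n = (n - j') % n) : j = j' := by
  rcases Nat.eq_zero_or_pos j with h0 | h0 <;> rcases Nat.eq_zero_or_pos j' with h0' | h0'
  · omega
  · subst h0
    rw [Nat.sub_zero, Nat.mod_self, Nat.mod_eq_of_lt (by omega)] at h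
    omega
  · subst h0'
    rw [Nat.sub_zero, Nat.mod_self, Nat.mod_eq_of_lt (by omega)] at h
    omega
  · rw [Nat.mod_eq_of_lt (by omega), Nat.mod_eq_of_lt (by omega)] at h
    omega

lemma filter_ind {N : ℕ} (s : Finset (Fin N)) :
    Finset.univ.filter (fun t => (if t ∈ s then (1 : ℤ) else -1) = 1) = s := by
  ext t
  simp only [Finset.mem_filter, Finset.mem_univ, true_and]
  split <;> simp_all

def pathEquivFinset (n k : ℕ) :
    {f : Fin (k * n) → ℤ // IsPathP n k f} ≃ {s : Finset (Fin (k * n)) // s.card = n + 1} where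
  toFun f := ⟨Finset.univ.filter (fun t => f.1 t = 1), f.2.2⟩
  invFun s := ⟨fun t => if t ∈ s.1 then 1 else -1,
    ⟨fun t => by dsimp only; split <;> simp, by rw [filter_ind]; exact s.2⟩⟩
  left_inv f := by
    apply Subtype.ext
    funext t
    simp only [Finset.mem_filter, Finset.mem_univ, true_and]
    rcases f.2.1 t with h | h <;> simp [h]
  right_inv s := Subtype.ext (filter_ind s.1)

end NK
end Stmt4Aux

/-- `n` times the number of paths `f ∈ 𝒫_{n,k}` all of whose interior
k-divisible points lie strictly above the baseline (i.e. `k*n·S(f,m) > m·(2−(k−2)n)`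
for every `m` with `0 < m < k*n` and `k ∣ m`) equals `C(kn, n+1)`. -/
theorem stmt_4 (n k : ℕ) (hn : 1 ≤ n) (hk : 2 ≤ k) :
    n * Nat.card {f : Fin (k * n) → ℤ // IsPathP n k f ∧
        ∀ m : ℕ, 0 < m → m < k * n → k ∣ m →
          ((k * n : ℕ) : ℤ) * pathSum f m > (m : ℤ) * (2 - ((k : ℤ) - 2) * (n : ℤ))} =
      Nat.choose (k * n) (n + 1) := by
  classical
  open Stmt4Aux in
  have hbij : Function.Bijective
      (fun p : (Fin n) × {f : Fin (k * n) → ℤ // IsPathP n k f ∧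
          ∀ m : ℕ, 0 < m → m < k * n → k ∣ m →
            ((k * n : ℕ) : ℤ) * pathSum f m > (m : ℤ) * (2 - ((k : ℤ) - 2) * (n : ℤ))} =>
        (⟨rot ((p.1 : ℕ) * k) p.2.1, isPathP_rot hn hk p.2.2.1 _⟩ :
          {f : Fin (k * n) → ℤ // IsPathP n k f})) := by
    constructor
    · rintro ⟨j, f, hf, hfc⟩ ⟨j', f', hf', hfc'⟩ h
      have h2 : rot ((j : ℕ) * k) f = rot ((j' : ℕ) * k) f' := congrArg Subtype.val h
      have hrec : rot (((n - (j : ℕ)) % n) * k) (rot ((j' : ℕ) * k) f') = f := by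
        rw [← h2]; exact rot_inv hn hk f j.isLt
      have hrec' : rot (((n - (j' : ℕ)) % n) * k) (rot ((j' : ℕ) * k) f') = f' :=
        rot_inv hn hk f' j'.isLt
      have hgpath : IsPathP n k (rot ((j' : ℕ) * k) f') := isPathP_rot hn hk hf' _
      have hmin1 : ∀ jj, 0 < jj → jj < n →
          Gg n k (rot ((j' : ℕ) * k) f') ((n - (j : ℕ)) % n)
            < Gg n k (rot ((j' : ℕ) * k) f') ((n - (j : ℕ)) % n + jj) := by
        apply (cond_rot_iff hn hk _ _).mp
        rw [hrec]
        exact hfc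
      have hmin2 : ∀ jj, 0 < jj → jj < n →
          Gg n k (rot ((j' : ℕ) * k) f') ((n - (j' : ℕ)) % n)
            < Gg n k (rot ((j' : ℕ) * k) f') ((n - (j' : ℕ)) % n + jj) := by
        apply (cond_rot_iff hn hk _ _).mp
        rw [hrec']
        exact hfc'
      have hceq : (n - (j : ℕ)) % n = (n - (j' : ℕ)) % n :=
        min_unique hn hk hgpath (Nat.mod_lt _ (by omega)) (Nat.mod_lt _ (by omega)) hmin1 hmin2
      have hjj : (j : ℕ) = (j' : ℕ) := modsub_inj j.isLt j'.isLt hceq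
      have hff : f = f' := by rw [← hrec, hceq]; exact hrec'
      subst hff
      simp only [Prod.mk.injEq, Subtype.mk.injEq]
      exact ⟨Fin.ext hjj, trivial⟩
    · rintro ⟨g, hg⟩
      obtain ⟨c, hcn, hmin⟩ := min_exists hn hk hg
      have hfpath : IsPathP n k (rot (c * k) g) := isPathP_rot hn hk hg _
      have hfcond := (cond_rot_iff hn hk g c).mpr hmin
      refine ⟨⟨⟨(n - c) % n, Nat.mod_lt _ (by omega)⟩,
        ⟨rot (c * k) g, hfpath, hfcond⟩⟩, ?_⟩
      apply Subtype.ext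
      exact rot_inv hn hk g hcn
  calc n * Nat.card {f : Fin (k * n) → ℤ // IsPathP n k f ∧
        ∀ m : ℕ, 0 < m → m < k * n → k ∣ m →
          ((k * n : ℕ) : ℤ) * pathSum f m > (m : ℤ) * (2 - ((k : ℤ) - 2) * (n : ℤ))}
      = Nat.card (Fin n) * Nat.card {f : Fin (k * n) → ℤ // IsPathP n k f ∧
        ∀ m : ℕ, 0 < m → m < k * n → k ∣ m →
          ((k * n : ℕ) : ℤ) * pathSum f m > (m : ℤ) * (2 - ((k : ℤ) - 2) * (n : ℤ))} := by
        rw [show Nat.card (Fin n) = n from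
          (Nat.card_eq_fintype_card (α := Fin n)).trans (Fintype.card_fin n)]
    _ = Nat.card ((Fin n) × {f : Fin (k * n) → ℤ // IsPathP n k f ∧
        ∀ m : ℕ, 0 < m → m < k * n → k ∣ m →
          ((k * n : ℕ) : ℤ) * pathSum f m > (m : ℤ) * (2 - ((k : ℤ) - 2) * (n : ℤ))}) :=
        (Nat.card_prod _ _).symm
    _ = Nat.card {f : Fin (k * n) → ℤ // IsPathP n k f} :=
        Nat.card_congr (Equiv.ofBijective _ hbij)
    _ = Nat.choose (k * n) (n + 1) := by
        rw [Nat.card_congr (Stmt4Aux.pathEquivFinset n k), Nat.card_eq_fintype_card,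
          Fintype.card_finset_len, Fintype.card_fin]
end

section
/- For every integer n ≥ 1, the n-th Catalan number equals the number of functions f : Fin(2n) → ℤ with f(t) ∈ {1, −1} for every t, with exactly n+1 values equal to 1 (a lattice path of n+1 upsteps and n−1 downsteps), such that every interior even-numbered point lies strictly above the line joining the path's initial and terminal points: for every m with 0 < m < 2n and 2 ∣ m, one has n·S(f, m) > m, where S(f, m) = Σ_{t<m} f(t). -/
open DyckStep

section PathSum

variable {N : ℕ}

theorem pathSum_eq_sum_take_ofFn (f : Fin N → ℤ) (m : ℕ) :
    pathSum f m = ((List.ofFn f).take m).sum :=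
  (List.sum_take_ofFn f m).symm

@[simp]
theorem pathSum_zero (f : Fin N → ℤ) : pathSum f 0 = 0 := by
  simp [pathSum]

theorem pathSum_succ (f : Fin N → ℤ) (t : Fin N) :
    pathSum f (t + 1) = pathSum f t + f t := by
  simp only [pathSum_eq_sum_take_ofFn]
  rw [List.sum_take_succ _ _ (by simp)]
  simp

theorem pathSum_of_le (f : Fin N → ℤ) {m : ℕ} (hm : N ≤ m) : pathSum f m = pathSum f N := by
  simp only [pathSum_eq_sum_take_ofFn]
  rw [List.take_of_length_le (by simpa), List.take_of_length_le (by simp)]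

theorem pathSum_cons (a : ℤ) (f : Fin N → ℤ) (m : ℕ) :
    pathSum (Fin.cons a f : Fin (N + 1) → ℤ) (m + 1) = a + pathSum f m := by
  simp [pathSum_eq_sum_take_ofFn, List.ofFn_succ]

theorem pathSum_snoc (f : Fin N → ℤ) (b : ℤ) {m : ℕ} (hm : m ≤ N) :
    pathSum (Fin.snoc f b : Fin (N + 1) → ℤ) m = pathSum f m := by
  rw [pathSum_eq_sum_take_ofFn, pathSum_eq_sum_take_ofFn, List.ofFn_succ', List.concat_eq_append,
    List.take_append_of_le_length (by simpa)]
  simp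

theorem pathSum_snoc_last (f : Fin N → ℤ) (b : ℤ) :
    pathSum (Fin.snoc f b : Fin (N + 1) → ℤ) (N + 1) = pathSum f N + b := by
  simpa [pathSum_snoc f b le_rfl] using pathSum_succ (Fin.snoc f b : Fin (N + 1) → ℤ) (Fin.last N)

end PathSum

section SignSequence

variable {N : ℕ} {f : Fin N → ℤ}

theorem even_pathSum_add (hf : ∀ t, f t = 1 ∨ f t = -1) {m : ℕ} (hm : m ≤ N) :
    Even (pathSum f m + m) := by
  induction m with
  | zero => simp
  | succ m ih =>
    obtain ⟨c, hc⟩ := ih (by omega)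
    have := pathSum_succ f ⟨m, hm⟩
    rcases hf ⟨m, hm⟩ with h | h <;> rw [h] at this
    · exact ⟨c + 1, by push_cast at hc ⊢; simp only at this; omega⟩
    · exact ⟨c, by push_cast at hc ⊢; simp only at this; omega⟩

theorem pathSum_length_eq (hf : ∀ t, f t = 1 ∨ f t = -1) :
    pathSum f N = 2 * (Finset.univ.filter (fun t => f t = 1)).card - N := by
  calc pathSum f N = ∑ t, f t := by simp [pathSum]
    _ = ∑ t, (2 * (if f t = 1 then 1 else 0) - 1) :=
      Finset.sum_congr rfl fun t _ => by rcases hf t with h | h <;> simp [h]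
    _ = _ := by rw [Finset.sum_sub_distrib, ← Finset.mul_sum, Finset.sum_boole]; simp

theorem two_le_pathSum_of_pos (hf : ∀ t, f t = 1 ∨ f t = -1) {m : ℕ} (hm : m ≤ N)
    (hm2 : 2 ∣ m) (hpos : 0 < pathSum f m) : 2 ≤ pathSum f m := by
  obtain ⟨c, hc⟩ := even_pathSum_add hf hm
  obtain ⟨k, rfl⟩ := hm2
  push_cast at hc
  omega

end SignSequence

structure IsPositivePath {N : ℕ} (f : Fin N → ℤ) : Prop where
  sign : ∀ t, f t = 1 ∨ f t = -1
  pathSum_length : pathSum f N = 2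
  pathSum_pos : ∀ m, 0 < m → 0 < pathSum f m

structure IsDyckPath {N : ℕ} (g : Fin N → ℤ) : Prop where
  sign : ∀ t, g t = 1 ∨ g t = -1
  pathSum_length : pathSum g N = 0
  pathSum_nonneg : ∀ m, 0 ≤ pathSum g m

theorem isPositivePath_iff {n : ℕ} (f : Fin (2 * n) → ℤ) :
    IsPositivePath f ↔ (∀ t, f t = 1 ∨ f t = -1) ∧
      (Finset.univ.filter (fun t : Fin (2 * n) => f t = 1)).card = n + 1 ∧
      ∀ m : ℕ, 0 < m → m < 2 * n → 2 ∣ m → (n : ℤ) * pathSum f m > (m : ℤ) := by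
  constructor
  · rintro ⟨hf, htot, hpos⟩
    refine ⟨hf, by have := pathSum_length_eq hf; omega, fun m hm0 hm hm2 => ?_⟩
    have := two_le_pathSum_of_pos hf hm.le hm2 (hpos m hm0)
    have : (m : ℤ) < 2 * n := by exact_mod_cast hm
    nlinarith
  · rintro ⟨hf, hcard, habove⟩
    have htot : pathSum f (2 * n) = 2 := by have := pathSum_length_eq hf; omega
    have heven : ∀ m, 0 < m → m ≤ 2 * n → 2 ∣ m → 2 ≤ pathSum f m := by
      intro m hm0 hm hm2
      obtain rfl | hlt := hm.eq_or_lt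
      · exact htot.ge
      refine two_le_pathSum_of_pos hf hm hm2 (pos_of_mul_pos_right ?_ n.cast_nonneg)
      exact (Nat.cast_pos.mpr hm0).trans (habove m hm0 hlt hm2)
    refine ⟨hf, htot, fun m hm0 => ?_⟩
    rcases le_or_gt (2 * n) m with hm | hm
    · rw [pathSum_of_le f hm, htot]; norm_num
    rcases Nat.even_or_odd m with ⟨k, hk⟩ | ⟨k, hk⟩
    · have := heven m hm0 hm.le ⟨k, by omega⟩
      omega
    · have := heven (m + 1) (by omega) hm ⟨k + 1, by omega⟩
      have hstep := pathSum_succ f ⟨m, hm⟩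
      rcases hf ⟨m, hm⟩ with h | h <;> simp only [h] at hstep <;> omega

section Shift

variable {N : ℕ}

theorem IsPositivePath.apply_zero {f : Fin (N + 1) → ℤ} (hf : IsPositivePath f) : f 0 = 1 := by
  have := hf.pathSum_pos 1 one_pos
  rw [← Fin.cons_self_tail f, pathSum_cons] at this
  rcases hf.sign 0 with h | h <;> simp_all

theorem IsPositivePath.isDyckPath_snoc_tail {f : Fin (N + 1) → ℤ} (hf : IsPositivePath f) :
    IsDyckPath (Fin.snoc (Fin.tail f) (-1) : Fin (N + 1) → ℤ) := by
  have hS : ∀ m, pathSum f (m + 1) = 1 + pathSum (Fin.tail f) m := fun m => by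
    rw [← hf.apply_zero, ← pathSum_cons, Fin.cons_self_tail]
  have hlast : pathSum (Fin.tail f) N = 1 := by have := hS N; have := hf.pathSum_length; omega
  have hlength : pathSum (Fin.snoc (Fin.tail f) (-1) : Fin (N + 1) → ℤ) (N + 1) = 0 := by
    rw [pathSum_snoc_last, hlast]; norm_num
  refine ⟨fun t => ?_, hlength, fun m => ?_⟩
  · induction t using Fin.lastCases with
    | last => simp
    | cast t => simpa [Fin.tail] using hf.sign t.succ
  · rcases le_or_gt m N with hm | hm
    · have := hS m
      have := hf.pathSum_pos (m + 1) m.succ_pos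
      rw [pathSum_snoc _ _ hm]; omega
    · rw [pathSum_of_le _ hm, hlength]

theorem IsDyckPath.apply_last {g : Fin (N + 1) → ℤ} (hg : IsDyckPath g) :
    g (Fin.last N) = -1 := by
  have hstep := pathSum_succ g (Fin.last N)
  have := hg.pathSum_nonneg N
  rw [Fin.val_last, hg.pathSum_length] at hstep
  rcases hg.sign (Fin.last N) with h | h <;> omega

theorem IsDyckPath.isPositivePath_cons_init {g : Fin (N + 1) → ℤ} (hg : IsDyckPath g) :
    IsPositivePath (Fin.cons 1 (Fin.init g) : Fin (N + 1) → ℤ) := by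
  have hS : ∀ m ≤ N, pathSum (Fin.init g) m = pathSum g m := fun m hm => by
    rw [← pathSum_snoc _ (g (Fin.last N)) hm, Fin.snoc_init_self]
  have hlast : pathSum (Fin.init g) N = 1 := by
    have := hg.pathSum_length
    rw [← Fin.snoc_init_self g, pathSum_snoc_last, hg.apply_last] at this
    omega
  refine ⟨fun t => ?_, by rw [pathSum_cons, hlast]; norm_num, fun m hm => ?_⟩
  · induction t using Fin.cases with
    | zero => simp
    | succ t => simpa [Fin.init] using hg.sign t.castSucc
  · obtain ⟨m, rfl⟩ := Nat.exists_eq_succ_of_ne_zero hm.ne'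
    rw [pathSum_cons]
    rcases le_or_gt m N with hm | hm
    · have := hg.pathSum_nonneg m
      rw [hS m hm]; omega
    · rw [pathSum_of_le _ hm.le, hlast]; norm_num

def positivePathEquivDyckPath (N : ℕ) :
    {f : Fin (N + 1) → ℤ // IsPositivePath f} ≃ {g : Fin (N + 1) → ℤ // IsDyckPath g} where
  toFun f := ⟨Fin.snoc (Fin.tail f.1) (-1), f.2.isDyckPath_snoc_tail⟩
  invFun g := ⟨Fin.cons 1 (Fin.init g.1), g.2.isPositivePath_cons_init⟩
  left_inv f := by
    ext1
    simp [← f.2.apply_zero]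
  right_inv g := by
    ext1
    simp [← g.2.apply_last]

theorem card_isPositivePath_eq_card_isDyckPath (hN : N ≠ 0) :
    Nat.card {f : Fin N → ℤ // IsPositivePath f} = Nat.card {g : Fin N → ℤ // IsDyckPath g} := by
  obtain ⟨M, rfl⟩ := Nat.exists_eq_succ_of_ne_zero hN
  exact Nat.card_congr (positivePathEquivDyckPath M)

end Shift

namespace DyckStep

def toInt : DyckStep → ℤ
  | U => 1
  | D => -1

def ofInt (x : ℤ) : DyckStep := if x = 1 then U else D

@[simp]
theorem ofInt_toInt (s : DyckStep) : ofInt s.toInt = s := by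
  cases s <;> rfl

theorem toInt_ofInt {x : ℤ} (hx : x = 1 ∨ x = -1) : (ofInt x).toInt = x := by
  rcases hx with rfl | rfl <;> rfl

theorem toInt_eq (s : DyckStep) : s.toInt = 1 ∨ s.toInt = -1 := by
  cases s <;> simp [toInt]

theorem sum_map_toInt (l : List DyckStep) : (l.map toInt).sum = l.count U - l.count D := by
  induction l with
  | nil => simp
  | cons s l ih => cases s <;> simp [ih, toInt] <;> ring

end DyckStep

section Dyck

variable {N : ℕ}

theorem pathSum_toInt_comp (s : Fin N → DyckStep) (m : ℕ) :
    pathSum (fun t => (s t).toInt) m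
      = ((List.ofFn s).take m).count U - ((List.ofFn s).take m).count D := by
  rw [pathSum_eq_sum_take_ofFn, ← DyckStep.sum_map_toInt, List.map_take, List.map_ofFn]
  rfl

theorem pathSum_eq_count_sub_count {g : Fin N → ℤ} (hg : ∀ t, g t = 1 ∨ g t = -1) (m : ℕ) :
    pathSum g m = ((List.ofFn fun t => DyckStep.ofInt (g t)).take m).count U
      - ((List.ofFn fun t => DyckStep.ofInt (g t)).take m).count D := by
  rw [← pathSum_toInt_comp]
  simp only [DyckStep.toInt_ofInt (hg _)]

def IsDyckPath.toDyckWord {g : Fin N → ℤ} (hg : IsDyckPath g) : DyckWord where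
  toList := List.ofFn fun t => DyckStep.ofInt (g t)
  count_U_eq_count_D := by
    have := hg.pathSum_length
    rw [pathSum_eq_count_sub_count hg.sign, List.take_of_length_le (by simp)] at this
    omega
  count_D_le_count_U i := by
    have := hg.pathSum_nonneg i
    rw [pathSum_eq_count_sub_count hg.sign] at this
    omega

theorem DyckWord.isDyckPath (p : DyckWord) :
    IsDyckPath fun t : Fin p.toList.length => (p.toList.get t).toInt := by
  refine ⟨fun t => DyckStep.toInt_eq _, ?_, fun m => ?_⟩
  · rw [pathSum_toInt_comp, List.ofFn_get, List.take_of_length_le le_rfl, p.count_U_eq_count_D]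
    simp
  · rw [pathSum_toInt_comp, List.ofFn_get]
    have := p.count_D_le_count_U m
    omega

def dyckPathEquivDyckWord (N : ℕ) :
    {g : Fin N → ℤ // IsDyckPath g} ≃ {p : DyckWord // p.toList.length = N} where
  toFun g := ⟨g.2.toDyckWord, List.length_ofFn⟩
  invFun p := ⟨fun t => (p.1.toList.get (t.cast p.2.symm)).toInt, by
    obtain ⟨p, rfl⟩ := p
    exact p.isDyckPath⟩
  left_inv g := by
    ext t
    simp only [IsDyckPath.toDyckWord, List.get_ofFn]
    exact DyckStep.toInt_ofInt (g.2.sign t)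
  right_inv := by
    rintro ⟨p, rfl⟩
    ext1
    apply DyckWord.ext
    simp [IsDyckPath.toDyckWord]

end Dyck

/-- the n-th Catalan number is the number of lattice paths of `n+1` upsteps
and `n−1` downsteps (functions `f : Fin (2n) → ℤ` with values in {1, −1} and exactly
`n+1` values 1) all of whose interior even-numbered points lie strictly above the line
joining the initial and terminal points: `n·S(f, m) > m` for all `0 < m < 2n` with `2 ∣ m`. -/
theorem stmt_5 (n : ℕ) (hn : 1 ≤ n) :
    catalan n = Nat.card {f : Fin (2 * n) → ℤ //
      (∀ t, f t = 1 ∨ f t = -1) ∧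
      (Finset.univ.filter (fun t : Fin (2 * n) => f t = 1)).card = n + 1 ∧
      ∀ m : ℕ, 0 < m → m < 2 * n → 2 ∣ m → (n : ℤ) * pathSum f m > (m : ℤ)} := by
  calc catalan n = Nat.card {p : DyckWord // p.toList.length = 2 * n} := by
        rw [← DyckWord.card_dyckWord_semilength_eq_catalan, ← Nat.card_eq_fintype_card]
        refine Nat.card_congr (Equiv.subtypeEquivRight fun p => ?_)
        rw [← p.two_mul_semilength_eq_length]
        omega
    _ = Nat.card {g : Fin (2 * n) → ℤ // IsDyckPath g} :=
        (Nat.card_congr (dyckPathEquivDyckWord _)).symm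
    _ = Nat.card {f : Fin (2 * n) → ℤ // IsPositivePath f} :=
        (card_isPositivePath_eq_card_isDyckPath (by omega)).symm
    _ = _ := Nat.card_congr (Equiv.subtypeEquivRight isPositivePath_iff)
end

section
/- Let n ≥ 1 and k ≥ 2 be integers and let f be a path in 𝒫_{n,k}. Then for every m with 0 < m < n, the cyclic left-rotation of f by km steps is not equal to f. Consequently the orbit of f under the operation 'rotate left k units' (transfer the initial k steps to the end) has exactly n elements. -/
/-- Cyclic left-rotation of `f : Fin N → ℤ` by `r` steps: `t ↦ f((t + r) mod N)`. -/
def rotL {N : ℕ} (r : ℕ) (f : Fin N → ℤ) : Fin N → ℤ :=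
  fun t => f ⟨((t : ℕ) + r) % N, Nat.mod_lt _ t.pos⟩

section Aux

lemma bezout_nat (r N : ℕ) (hr : 0 < r) (hN : 0 < N) :
    ∃ a b : ℕ, a * r = Nat.gcd r N + b * N := by
  set g := Nat.gcd r N with hg
  have hb : (g : ℤ) = r * Nat.gcdA r N + N * Nat.gcdB r N := Nat.gcd_eq_gcd_ab r N
  set A := Nat.gcdA r N with hA
  have hNz : (N : ℤ) ≠ 0 := by exact_mod_cast hN.ne'
  have hmodnn : 0 ≤ A % (N : ℤ) := Int.emod_nonneg A hNz
  set a : ℕ := (A % (N : ℤ)).toNat + N with ha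
  have haZ : (a : ℤ) = A % (N : ℤ) + N := by
    simp [ha, Int.toNat_of_nonneg hmodnn]
  have hdvd1 : (N : ℤ) ∣ (a : ℤ) - A := by
    refine ⟨1 - A / (N : ℤ), ?_⟩
    rw [haZ]
    linear_combination Int.emod_add_mul_ediv A (N : ℤ)
  have hdvd : (N : ℤ) ∣ (a : ℤ) * r - g := by
    have h2 : (a : ℤ) * r - g = ((a : ℤ) - A) * r - N * Nat.gcdB r N := by
      rw [hb]; ring
    rw [h2]
    exact dvd_sub (Dvd.dvd.mul_right hdvd1 _) (Dvd.intro _ rfl)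
  have hle : g ≤ a * r := by
    have h1 : g ≤ N := Nat.le_of_dvd hN (Nat.gcd_dvd_right r N)
    have h2 : N ≤ a := by simp [ha]
    calc g ≤ N := h1
      _ ≤ a * r := le_trans (Nat.le_mul_of_pos_right _ hr) (Nat.mul_le_mul_right r h2)
  have hdvdN : N ∣ a * r - g := by
    have hcast : ((a * r - g : ℕ) : ℤ) = (a : ℤ) * r - g := by
      push_cast [Nat.cast_sub hle]; ring
    have : (N : ℤ) ∣ ((a * r - g : ℕ) : ℤ) := by rw [hcast]; exact hdvd
    exact_mod_cast this
  obtain ⟨b, hbb⟩ := hdvdN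
  exact ⟨a, b, by rw [Nat.mul_comm b N]; omega⟩

lemma periodic_gcd {F : ℕ → ℤ} {r N : ℕ} (hr : 0 < r) (hN : 0 < N)
    (h1 : ∀ t, F (t + r) = F t) (h2 : ∀ t, F (t + N) = F t) :
    ∀ t, F (t + Nat.gcd r N) = F t := by
  have hmul1 : ∀ a t, F (t + a * r) = F t := by
    intro a
    induction a with
    | zero => simp
    | succ a ih => intro t; rw [Nat.succ_mul, ← Nat.add_assoc, h1, ih]
  have hmul2 : ∀ b t, F (t + b * N) = F t := by
    intro b
    induction b with
    | zero => simp
    | succ b ih => intro t; rw [Nat.succ_mul, ← Nat.add_assoc, h2, ih]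
  obtain ⟨a, b, hab⟩ := bezout_nat r N hr hN
  intro t
  have h3 := hmul1 a t
  rw [hab, ← Nat.add_assoc] at h3
  rw [← h3, hmul2]

lemma count_periodic {F : ℕ → ℤ} {g : ℕ} (h : ∀ t, F (t + g) = F t) (q : ℕ) :
    ((Finset.range (g * q)).filter (fun t => F t = 1)).card
      = q * ((Finset.range g).filter (fun t => F t = 1)).card := by
  have hmul : ∀ j t, F (t + g * j) = F t := by
    intro j
    induction j with
    | zero => simp
    | succ j ih => intro t; rw [Nat.mul_succ, ← Nat.add_assoc, h, ih]
  induction q with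
  | zero => simp
  | succ q ih =>
    have hsplit : Finset.range (g * (q + 1)) =
        Finset.range (g * q) ∪ (Finset.range g).map (addLeftEmbedding (g * q)) := by
      rw [Nat.mul_succ, Finset.range_add]
    rw [hsplit, Finset.filter_union, Finset.card_union_of_disjoint, ih]
    · rw [Finset.filter_map, Finset.card_map]
      have heq : (Finset.range g).filter ((fun t => F t = 1) ∘ (addLeftEmbedding (g * q)))
          = (Finset.range g).filter (fun t => F t = 1) := by
        apply Finset.filter_congr
        intro x _
        simp only [Function.comp, addLeftEmbedding_apply]
        rw [Nat.add_comm, hmul q x]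
      rw [heq]; ring
    · refine Finset.disjoint_filter_filter (Finset.disjoint_left.2 ?_)
      intro x hx hx2
      simp only [Finset.mem_range] at hx
      simp only [Finset.mem_map, addLeftEmbedding_apply] at hx2
      obtain ⟨y, _, hy⟩ := hx2
      omega

end Aux

section RotAux

lemma rotL_rotL {N : ℕ} (r s : ℕ) (f : Fin N → ℤ) :
    rotL r (rotL s f) = rotL (s + r) f := by
  funext t
  simp only [rotL]
  congr 1
  apply Fin.ext
  simp only [Nat.mod_add_mod]
  congr 1
  omega

lemma rotL_mod {N : ℕ} (r : ℕ) (f : Fin N → ℤ) :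
    rotL r f = rotL (r % N) f := by
  funext t
  simp only [rotL]
  congr 1
  apply Fin.ext
  simp [Nat.add_mod_mod]

lemma rotL_zero {N : ℕ} (f : Fin N → ℤ) : rotL 0 f = f := by
  funext t
  simp only [rotL, Nat.add_zero]
  congr 1
  exact Fin.ext (Nat.mod_eq_of_lt t.isLt)

lemma rotL_iterate {N : ℕ} (k : ℕ) (f : Fin N → ℤ) (m : ℕ) :
    (rotL k)^[m] f = rotL (k * m) f := by
  induction m with
  | zero => simp [rotL_zero]
  | succ m ih =>
    rw [Function.iterate_succ_apply', ih, rotL_rotL, Nat.mul_succ]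

lemma rotL_add_mul {N : ℕ} (r b : ℕ) (f : Fin N → ℤ) :
    rotL (r + N * b) f = rotL r f := by
  rw [rotL_mod, Nat.add_mul_mod_self_left, ← rotL_mod]

end RotAux

lemma key_part1 (n k : ℕ) (hn : 1 ≤ n) (hk : 2 ≤ k) (f : Fin (k * n) → ℤ)
    (hf : IsPathP n k f) :
    ∀ m : ℕ, 0 < m → m < n → rotL (k * m) f ≠ f := by
  intro m hm hmn hEq
  have hN : 0 < k * n := Nat.mul_pos (by omega) (by omega)
  have h1 : ∀ t, f ⟨(t + k * m) % (k * n), Nat.mod_lt _ hN⟩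
      = f ⟨t % (k * n), Nat.mod_lt _ hN⟩ := by
    intro t
    have h2 := congrFun hEq ⟨t % (k * n), Nat.mod_lt _ hN⟩
    simp only [rotL] at h2
    simpa [Nat.mod_add_mod] using h2
  set F : ℕ → ℤ := fun t => f ⟨t % (k * n), Nat.mod_lt _ hN⟩ with hF
  have h1' : ∀ t, F (t + k * m) = F t := h1
  have hperN : ∀ t, F (t + k * n) = F t := by
    intro t
    simp only [hF, Nat.add_mod_right]
  have hkm : 0 < k * m := Nat.mul_pos (by omega) hm
  have hg : ∀ t, F (t + Nat.gcd (k * m) (k * n)) = F t := periodic_gcd hkm hN h1' hperN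
  have hgcd : Nat.gcd (k * m) (k * n) = k * Nat.gcd m n := Nat.gcd_mul_left k m n
  have hgper : ∀ t, F (t + k * Nat.gcd m n) = F t := by
    intro t; rw [← hgcd]; exact hg t
  set d := Nat.gcd m n with hd
  set q := n / d with hq
  have hdpos : 0 < d := Nat.gcd_pos_of_pos_left n hm
  have hdn : d ∣ n := Nat.gcd_dvd_right m n
  have hnq : d * q = n := Nat.mul_div_cancel' hdn
  have hNgq : k * n = (k * d) * q := by rw [← hnq]; ring
  have hcount := count_periodic hgper q
  have hcard : (Finset.univ.filter (fun t : Fin (k * n) => f t = 1)).card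
      = ((Finset.range (k * n)).filter (fun t => F t = 1)).card := by
    have hFt : ∀ t : Fin (k * n), F (t : ℕ) = f t := by
      intro t
      simp [hF, Nat.mod_eq_of_lt t.isLt]
    rw [Finset.card_filter, Finset.card_filter]
    rw [← Fin.sum_univ_eq_sum_range (fun i => if F i = 1 then (1:ℕ) else 0) (k * n)]
    exact Finset.sum_congr rfl (fun t _ => by rw [hFt t])
  have hn1 : n + 1 = q * ((Finset.range (k * d)).filter (fun t => F t = 1)).card := by
    rw [← hf.2, hcard, hNgq, hcount]
  have hqdvd1 : q ∣ n + 1 := Dvd.intro _ hn1.symm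
  have hqdvdn : q ∣ n := Dvd.intro_left _ hnq
  have hq1 : q = 1 := by
    have h := Nat.dvd_sub hqdvd1 hqdvdn
    simp only [Nat.add_sub_cancel_left] at h
    exact Nat.dvd_one.mp (by simpa using h)
  have hdeq : d = n := by rw [hq1, Nat.mul_one] at hnq; exact hnq
  have hdle : d ≤ m := Nat.gcd_le_left n hm
  omega

/-- for a path `f ∈ 𝒫_{n,k}` and every `m` with `0 < m < n`, the cyclic
left-rotation of `f` by `k*m` steps is not equal to `f`; consequently the orbit of `f`
under "rotate left k units" has exactly `n` elements. -/
theorem stmt_6 (n k : ℕ) (hn : 1 ≤ n) (hk : 2 ≤ k) (f : Fin (k * n) → ℤ)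
    (hf : IsPathP n k f) :
    (∀ m : ℕ, 0 < m → m < n → rotL (k * m) f ≠ f) ∧
    Nat.card {g : Fin (k * n) → ℤ // ∃ m : ℕ, (rotL k)^[m] f = g} = n := by
  have key := key_part1 n k hn hk f hf
  refine ⟨key, ?_⟩
  have hkn : rotL (k * n) f = f := by
    have h0 := rotL_add_mul 0 1 f
    simpa [rotL_zero] using h0
  have hrot_reduce : ∀ m : ℕ, rotL (k * m) f = rotL (k * (m % n)) f := by
    intro m
    have hsplit : k * m = k * (m % n) + (k * n) * (m / n) := by
      conv_lhs => rw [← Nat.mod_add_div m n]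
      ring
    rw [hsplit, rotL_add_mul]
  set φ : Fin n → {g : Fin (k * n) → ℤ // ∃ m : ℕ, (rotL k)^[m] f = g} :=
    fun i => ⟨rotL (k * i) f, i, rotL_iterate k f i⟩ with hφ
  have hbij : Function.Bijective φ := by
    constructor
    · intro i j hij
      have h2 : rotL (k * (i : ℕ)) f = rotL (k * (j : ℕ)) f := congrArg Subtype.val hij
      by_contra hne
      have hne' : (i : ℕ) ≠ (j : ℕ) := fun h => hne (Fin.ext h)
      rcases Nat.lt_or_ge (i : ℕ) (j : ℕ) with hlt | hge
      · have h3 := congrArg (rotL (k * (n - (j : ℕ)))) h2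
        rw [rotL_rotL, rotL_rotL, ← Nat.mul_add, ← Nat.mul_add] at h3
        have hjn : (j : ℕ) + (n - (j : ℕ)) = n := by omega
        rw [hjn, hkn] at h3
        exact key ((i : ℕ) + (n - (j : ℕ))) (by omega)
          (by have := j.isLt; omega) h3
      · have hlt' : (j : ℕ) < (i : ℕ) := by omega
        have h3 := congrArg (rotL (k * (n - (i : ℕ)))) h2.symm
        rw [rotL_rotL, rotL_rotL, ← Nat.mul_add, ← Nat.mul_add] at h3
        have hin : (i : ℕ) + (n - (i : ℕ)) = n := by omega
        rw [hin, hkn] at h3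
        exact key ((j : ℕ) + (n - (i : ℕ))) (by omega)
          (by have := i.isLt; omega) h3
    · rintro ⟨g, m, hg⟩
      refine ⟨⟨m % n, Nat.mod_lt m (by omega)⟩, ?_⟩
      apply Subtype.ext
      simp only [hφ]
      rw [← hg, rotL_iterate, hrot_reduce m]
  have hc := Nat.card_eq_of_bijective φ hbij
  rw [← hc, Nat.card_eq_fintype_card, Fintype.card_fin]
end

section
/- Let n ≥ 1, k ≥ 2 and j ≥ 1 be integers with n + j ≤ kn, let f be a path in 𝒫_{n,k,j}, and let i be an integer with 1 ≤ i ≤ j. Then no interior k-divisible point of f lies on the baseline for (f, i): there is no m with 0 < m < kn and k ∣ m such that kn·(S(f, m) − 2(i−1)) = m·(2 − (k−2)n). -/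
/-- A path in 𝒫_{n,k,j}: a function `f : Fin (k*n) → ℤ` with all values in {1, −1}
and exactly `n+j` values equal to 1. -/
def IsPathPJ (n k j : ℕ) (f : Fin (k * n) → ℤ) : Prop :=
  (∀ t, f t = 1 ∨ f t = -1) ∧
    (Finset.univ.filter (fun t : Fin (k * n) => f t = 1)).card = n + j

lemma pathSum_parity {N : ℕ} (f : Fin N → ℤ) (hf : ∀ t, f t = 1 ∨ f t = -1) :
    ∀ m, m ≤ N → (2 : ℤ) ∣ pathSum f m - m := by
  intro m
  induction m with
  | zero => intro _; simp [pathSum]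
  | succ m ih =>
    intro hm
    have hm' : m ≤ N := Nat.le_of_succ_le hm
    have h1 := ih hm'
    have hset : (Finset.univ.filter fun t : Fin N => (t : ℕ) < m + 1) =
        insert (⟨m, hm⟩ : Fin N) (Finset.univ.filter fun t : Fin N => (t : ℕ) < m) := by
      ext t
      simp only [Finset.mem_filter, Finset.mem_insert, Finset.mem_univ, true_and, Fin.ext_iff]
      omega
    have hstep : pathSum f (m + 1) = f ⟨m, hm⟩ + pathSum f m := by
      rw [pathSum, hset, Finset.sum_insert (by simp)]; rfl
    rcases hf ⟨m, hm⟩ with h | h <;> rw [h] at hstep <;>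
      · rw [hstep]; push_cast; omega

/-- for a path `f ∈ 𝒫_{n,k,j}` and `1 ≤ i ≤ j`, no interior k-divisible
point of `f` lies on the baseline for `(f, i)`: there is no `m` with `0 < m < kn`,
`k ∣ m` and `kn·(S(f, m) − 2(i−1)) = m·(2 − (k−2)n)`. -/
theorem stmt_8 (n k j : ℕ) (hn : 1 ≤ n) (hk : 2 ≤ k) (hj : 1 ≤ j)
    (hnj : n + j ≤ k * n) (f : Fin (k * n) → ℤ) (hf : IsPathPJ n k j f)
    (i : ℕ) (hi1 : 1 ≤ i) (hij : i ≤ j) :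
    ¬ ∃ m : ℕ, 0 < m ∧ m < k * n ∧ k ∣ m ∧
      ((k * n : ℕ) : ℤ) * (pathSum f m - 2 * ((i : ℤ) - 1)) =
        (m : ℤ) * (2 - ((k : ℤ) - 2) * (n : ℤ)) := by
  rintro ⟨m, hm0, hmlt, ⟨q, rfl⟩, heq⟩
  set S : ℤ := pathSum f (k * q) with hSdef
  have hk0 : 0 < k := by omega
  have hq0 : 0 < q := Nat.pos_of_ne_zero (fun h => by simp [h] at hm0)
  have hqn : q < n := Nat.lt_of_mul_lt_mul_left hmlt
  have hK0 : ((k : ℤ)) ≠ 0 := by exact_mod_cast hk0.ne'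
  -- cancel k
  have h1 : (n : ℤ) * (S - 2 * ((i : ℤ) - 1)) = (q : ℤ) * (2 - ((k : ℤ) - 2) * (n : ℤ)) := by
    apply mul_left_cancel₀ hK0
    push_cast at heq ⊢
    linarith [heq]
  -- set A
  set A : ℤ := S - 2 * ((i : ℤ) - 1) + ((k : ℤ) - 2) * (q : ℤ) with hAdef
  have h2 : (n : ℤ) * A = 2 * (q : ℤ) := by
    rw [hAdef]; ring_nf; linear_combination h1
  have hN0 : (0 : ℤ) < (n : ℤ) := by exact_mod_cast hn
  have hQ0 : (0 : ℤ) < (q : ℤ) := by exact_mod_cast hq0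
  have hQN : (q : ℤ) < (n : ℤ) := by exact_mod_cast hqn
  have hA2 : A < 2 := by
    have : (n : ℤ) * A < (n : ℤ) * 2 := by linarith
    exact lt_of_mul_lt_mul_left this hN0.le
  have hA0 : 0 < A := by
    have : (n : ℤ) * 0 < (n : ℤ) * A := by linarith
    exact lt_of_mul_lt_mul_left this hN0.le
  have hA1 : A = 1 := by omega
  have hmZ : ((k * q : ℕ) : ℤ) = (k : ℤ) * (q : ℤ) := by push_cast; ring
  have hSM : S + ((k * q : ℕ) : ℤ) = 2 * (i : ℤ) - 1 + 2 * (q : ℤ) := by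
    rw [hmZ]; linear_combination hA1 + hmZ - hmZ
  have hpar : (2 : ℤ) ∣ S - ((k * q : ℕ) : ℤ) :=
    pathSum_parity f hf.1 (k * q) (le_of_lt hmlt)
  omega
end

section
/- Let n ≥ 1, k ≥ 2 and j ≥ 1 be integers with n + j ≤ kn. Then n times the number of pairs (f, i), where f is a path in 𝒫_{n,k,j}, 1 ≤ i ≤ j, and every interior k-divisible point of f lies strictly above the baseline for (f, i) (i.e. kn·(S(f, m) − 2(i−1)) > m·(2−(k−2)n) for every m with 0 < m < kn and k ∣ m), equals j·C(kn, n+j). Equivalently, (j/n)·C(kn, n+j) is the number of lattice paths of n+j upsteps and kn−(n+j) downsteps which start at (0, −2i) for some i ≥ 0 and have all interior k-divisible points strictly above the line through the origin of slope −((k−2)n−2)/(kn). -/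
open Finset

section CycleLemma

/-- When `D (m + n) = D m + j`, this is also the minimum of `D` over all `m ≥ s`. -/
def windowMin (D : ℕ → ℤ) (n : ℕ) [NeZero n] (s : ℕ) : ℤ :=
  (range n).inf' (nonempty_range_iff.2 (NeZero.ne n)) fun r => D (s + r)

variable {D : ℕ → ℤ} {n : ℕ} [NeZero n] {j : ℕ}

lemma windowMin_le {s r : ℕ} (hr : r < n) : windowMin D n s ≤ D (s + r) :=
  inf'_le _ (mem_range.2 hr)

lemma le_windowMin_iff {a : ℤ} {s : ℕ} : a ≤ windowMin D n s ↔ ∀ r < n, a ≤ D (s + r) := by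
  simp [windowMin]

variable (D n) in
lemma exists_windowMin_eq (s : ℕ) : ∃ r < n, windowMin D n s = D (s + r) := by
  obtain ⟨r, hr, h⟩ :=
    exists_mem_eq_inf' (nonempty_range_iff.2 (NeZero.ne n)) fun r => D (s + r)
  exact ⟨r, mem_range.1 hr, h⟩

lemma windowMin_add_period (hD : ∀ m, D (m + n) = D m + j) (s : ℕ) :
    windowMin D n (s + n) = windowMin D n s + j := by
  obtain ⟨r, hr, hmin⟩ := exists_windowMin_eq D n s
  obtain ⟨r', hr', hmin'⟩ := exists_windowMin_eq D n (s + n)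
  have h₁ : windowMin D n (s + n) ≤ D (s + n + r) := windowMin_le hr
  have h₂ : windowMin D n s ≤ D (s + r') := windowMin_le hr'
  rw [add_right_comm, hD] at h₁ hmin'
  omega

lemma windowMin_eq_min_succ (hD : ∀ m, D (m + n) = D m + j) (s : ℕ) :
    windowMin D n s = min (D s) (windowMin D n (s + 1)) := by
  have hmin_le_self : windowMin D n s ≤ D s := windowMin_le (NeZero.pos n)
  apply le_antisymm
  · refine le_min hmin_le_self (le_windowMin_iff.2 fun r hr => ?_)
    rcases Nat.lt_or_ge (r + 1) n with hr' | hr'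
    · simpa [add_assoc, add_comm 1] using windowMin_le (D := D) (s := s) hr'
    · rw [show s + 1 + r = s + n by omega, hD]
      omega
  · obtain ⟨r, hr, hmin⟩ := exists_windowMin_eq D n s
    rw [hmin]
    rcases r with _ | r
    · exact min_le_left _ _
    · have h : windowMin D n (s + 1) ≤ D (s + 1 + r) := windowMin_le (by omega)
      rw [add_right_comm, add_assoc] at h
      exact (min_le_right _ _).trans h

lemma add_le_windowMin_succ_iff (hD : ∀ m, D (m + n) = D m + j) {s : ℕ} {a : ℤ} :
    D s + a ≤ windowMin D n (s + 1) ↔ a ≤ j ∧ ∀ q ∈ Ioo (0 : ℕ) n, D s + a ≤ D (s + q) := by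
  have hn := NeZero.pos n
  simp only [le_windowMin_iff, mem_Ioo]
  constructor
  · intro h
    refine ⟨?_, fun q hq => ?_⟩
    · have hlast := h (n - 1) (by omega)
      rw [show s + 1 + (n - 1) = s + n by omega, hD] at hlast
      omega
    · simpa [show s + 1 + (q - 1) = s + q by omega] using h (q - 1) (by omega)
  · rintro ⟨haj, h⟩ r hr
    rcases Nat.lt_or_ge (r + 1) n with hr' | hr'
    · simpa [add_assoc, add_comm 1] using h (r + 1) ⟨r.succ_pos, hr'⟩
    · rw [show s + 1 + r = s + n by omega, hD]
      omega

-- The ascriptions `(0 : ℕ)` and `(i : ℕ)` are needed: otherwise `i` elaborates as an integer.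
lemma card_filter_eq_windowMin_sub (hD : ∀ m, D (m + n) = D m + j) (s : ℕ) :
    (#{i ∈ Icc 1 j | ∀ q ∈ Ioo (0 : ℕ) n, D s + (i : ℕ) ≤ D (s + q)} : ℤ) =
      windowMin D n (s + 1) - windowMin D n s := by
  have hfilter : {i ∈ Icc 1 j | ∀ q ∈ Ioo (0 : ℕ) n, D s + (i : ℕ) ≤ D (s + q)} =
      Icc 1 (windowMin D n (s + 1) - D s).toNat := by
    ext i
    have hfits := add_le_windowMin_succ_iff hD (s := s) (a := i)
    rw [Nat.cast_le] at hfits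
    rw [mem_filter, mem_Icc, and_assoc, ← hfits, mem_Icc]
    omega
  rw [hfilter, Nat.card_Icc, windowMin_eq_min_succ hD s]
  omega

theorem cycle_lemma (hD : ∀ m, D (m + n) = D m + j) :
    ∑ s ∈ range n, #{i ∈ Icc 1 j | ∀ q ∈ Ioo (0 : ℕ) n, D s + (i : ℕ) ≤ D (s + q)} = j := by
  zify
  rw [sum_congr rfl fun s _ => card_filter_eq_windowMin_sub hD s, sum_range_sub (windowMin D n)]
  have h := windowMin_add_period hD 0
  rw [zero_add] at h
  omega

end CycleLemma

open Fin.NatCast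

section CyclicSum

variable {N : ℕ} [NeZero N]

def cyclicSum (g : Fin N → ℤ) (m : ℕ) : ℤ :=
  ∑ t ∈ range m, g t

lemma pathSum_eq_cyclicSum (g : Fin N → ℤ) {m : ℕ} (hm : m ≤ N) :
    pathSum g m = cyclicSum g m := by
  have hrange : (range N).filter (· < m) = range m := by
    ext t
    simp only [mem_filter, mem_range]
    omega
  rw [pathSum, sum_filter, cyclicSum, ← hrange, sum_filter,
    ← Fin.sum_univ_eq_sum_range (fun t => if t < m then g t else 0)]
  simp

lemma cyclicSum_add (g : Fin N → ℤ) (a b : ℕ) :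
    cyclicSum g (a + b) = cyclicSum g a + cyclicSum (fun t => g (t + (a : Fin N))) b := by
  simp only [cyclicSum, sum_range_add, Nat.cast_add, add_comm (a : Fin N)]

lemma cyclicSum_self (g : Fin N → ℤ) : cyclicSum g N = ∑ t, g t := by
  simp [cyclicSum, ← Fin.sum_univ_eq_sum_range (fun t => g t)]

lemma cyclicSum_self_add (g : Fin N → ℤ) (m : ℕ) :
    cyclicSum g (N + m) = ∑ t, g t + cyclicSum g m := by
  simp [cyclicSum_add, cyclicSum_self]

end CyclicSum

section BlockExcess

variable {N : ℕ} [NeZero N]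

def rotate (c : Fin N) : Equiv.Perm (Fin N → ℤ) where
  toFun f t := f (t + c)
  invFun f t := f (t - c)
  left_inv f := by simp
  right_inv f := by simp

def blockExcess (k : ℕ) (f : Fin N → ℤ) (q : ℕ) : ℤ :=
  cyclicSum (fun t => if f t = 1 then 1 else 0) (k * q) - q

lemma blockExcess_rotate (k : ℕ) (f : Fin N → ℤ) (s q : ℕ) :
    blockExcess k (rotate ((k * s : ℕ) : Fin N) f) q =
      blockExcess k f (s + q) - blockExcess k f s := by
  have hrot : blockExcess k (rotate ((k * s : ℕ) : Fin N) f) q =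
      cyclicSum (fun t => if f (t + ((k * s : ℕ) : Fin N)) = 1 then 1 else 0) (k * q) - q := rfl
  rw [hrot, blockExcess, blockExcess, mul_add, cyclicSum_add, Nat.cast_add]
  ring

lemma blockExcess_add_period {n k j : ℕ} [NeZero (k * n)] {f : Fin (k * n) → ℤ}
    (hf : #{t | f t = 1} = n + j) (m : ℕ) :
    blockExcess k f (m + n) = blockExcess k f m + j := by
  simp only [blockExcess, mul_add, add_comm (k * m), cyclicSum_self_add, sum_boole, hf]
  push_cast
  ring

lemma pathSum_eq_two_mul_cyclicSum_sub {f : Fin N → ℤ} (hf : ∀ t, f t = 1 ∨ f t = -1)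
    {m : ℕ} (hm : m ≤ N) :
    pathSum f m = 2 * cyclicSum (fun t => if f t = 1 then 1 else 0) m - m := by
  have hsign : ∀ t, f t = 2 * (if f t = 1 then 1 else 0) - 1 := fun t => by
    rcases hf t with h | h <;> simp [h]
  rw [pathSum_eq_cyclicSum f hm, cyclicSum, cyclicSum, sum_congr rfl fun (t : ℕ) _ => hsign t,
    sum_sub_distrib, mul_sum]
  simp

end BlockExcess

-- `u` counts the upsteps before `kq`, so that the height there is `2u - kq`.
lemma baseline_iff {n k q : ℕ} (hk : 0 < k) (hq : 0 < q) (hqn : q < n) (u i : ℤ) :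
    ((k * n : ℕ) : ℤ) * ((2 * u - ((k * q : ℕ) : ℤ)) - 2 * (i - 1)) >
        ((k * q : ℕ) : ℤ) * (2 - ((k : ℤ) - 2) * n) ↔ i ≤ u - q := by
  have hexpand : ((k * n : ℕ) : ℤ) * ((2 * u - ((k * q : ℕ) : ℤ)) - 2 * (i - 1)) -
      ((k * q : ℕ) : ℤ) * (2 - ((k : ℤ) - 2) * n) = 2 * k * (n * (u - q - i + 1) - q) := by
    push_cast
    ring
  have hk' : (0 : ℤ) < k := by exact_mod_cast hk
  have hqn' : (q : ℤ) < n := by exact_mod_cast hqn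
  rw [gt_iff_lt, ← sub_pos, hexpand]
  constructor
  · intro h
    have : (0 : ℤ) < n * (u - q - i + 1) - q := pos_of_mul_pos_right h (by positivity)
    nlinarith
  · intro h
    have : (0 : ℤ) ≤ n * (u - q - i) := mul_nonneg (by positivity) (by linarith)
    nlinarith

lemma baseline_condition_iff {n k : ℕ} [NeZero (k * n)] {f : Fin (k * n) → ℤ}
    (hf : ∀ t, f t = 1 ∨ f t = -1) (i : ℕ) :
    (∀ m : ℕ, 0 < m → m < k * n → k ∣ m →
        ((k * n : ℕ) : ℤ) * (pathSum f m - 2 * ((i : ℤ) - 1)) >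
          (m : ℤ) * (2 - ((k : ℤ) - 2) * (n : ℤ))) ↔
      ∀ q ∈ Ioo (0 : ℕ) n, (i : ℤ) ≤ blockExcess k f q := by
  have hk : 0 < k := Nat.pos_of_ne_zero (left_ne_zero_of_mul (NeZero.ne (k * n)))
  have hblock : ∀ q ∈ Ioo (0 : ℕ) n,
      (((k * n : ℕ) : ℤ) * (pathSum f (k * q) - 2 * ((i : ℤ) - 1)) >
        ((k * q : ℕ) : ℤ) * (2 - ((k : ℤ) - 2) * (n : ℤ)) ↔ (i : ℤ) ≤ blockExcess k f q) := by
    intro q hq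
    rw [mem_Ioo] at hq
    rw [pathSum_eq_two_mul_cyclicSum_sub hf (Nat.mul_le_mul_left k hq.2.le)]
    exact baseline_iff hk hq.1 hq.2 _ _
  constructor
  · intro h q hq
    have ⟨hq₀, hqn⟩ := mem_Ioo.1 hq
    exact (hblock q hq).1 (h (k * q) (Nat.mul_pos hk hq₀) (Nat.mul_lt_mul_of_pos_left hqn hk)
      (dvd_mul_right k q))
  · rintro h _ hm hmn ⟨q, rfl⟩
    have hq : q ∈ Ioo 0 n :=
      mem_Ioo.2 ⟨Nat.pos_of_mul_pos_left hm, Nat.lt_of_mul_lt_mul_left hmn⟩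
    exact (hblock q hq).2 (h q hq)

def upDownPaths (N u : ℕ) : Finset (Fin N → ℤ) :=
  {f ∈ Fintype.piFinset fun _ => {1, -1} | #{t | f t = 1} = u}

lemma mem_upDownPaths {N u : ℕ} {f : Fin N → ℤ} :
    f ∈ upDownPaths N u ↔ (∀ t, f t = 1 ∨ f t = -1) ∧ #{t | f t = 1} = u := by
  simp [upDownPaths]

lemma comp_mem_upDownPaths_iff {N u : ℕ} {f : Fin N → ℤ} (e : Equiv.Perm (Fin N)) :
    f ∘ e ∈ upDownPaths N u ↔ f ∈ upDownPaths N u := by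
  have hcard : #{t | (f ∘ e) t = 1} = #{t | f t = 1} :=
    card_bij' (fun t _ => e t) (fun t _ => e.symm t) (by simp) (by simp) (by simp) (by simp)
  rw [mem_upDownPaths, mem_upDownPaths, hcard]
  exact and_congr_left' ⟨fun h t => by simpa using h (e.symm t), fun h t => h (e t)⟩

lemma card_upDownPaths (N u : ℕ) : #(upDownPaths N u) = N.choose u := by
  suffices #(upDownPaths N u) = #(powersetCard u (univ : Finset (Fin N))) by simpa
  refine card_nbij' (fun f => ({t | f t = 1} : Finset (Fin N)))
    (fun A t => if t ∈ A then 1 else -1) ?_ ?_ ?_ ?_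
  · intro f hf
    simpa using (mem_upDownPaths.1 hf).2
  · intro A hA
    rw [mem_coe, mem_powersetCard] at hA
    simp [mem_upDownPaths, hA.2, em]
  · intro f hf
    ext t
    rcases (mem_upDownPaths.1 hf).1 t with h | h <;> simp [h]
  · intro A _
    ext t
    simp

lemma mul_sum_eq_mul_card_of_sum_perm_eq {α : Type*} {n j : ℕ} (P : Finset α)
    (σ : ℕ → Equiv.Perm α) (hσ : ∀ s x, σ s x ∈ P ↔ x ∈ P) (w : α → ℕ)
    (hw : ∀ x ∈ P, ∑ s ∈ range n, w (σ s x) = j) :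
    n * ∑ x ∈ P, w x = j * #P := calc
  n * ∑ x ∈ P, w x = ∑ s ∈ range n, ∑ x ∈ P, w (σ s x) := by
    rw [sum_congr rfl fun s _ => sum_equiv (σ s) (fun x => (hσ s x).symm) fun _ _ => rfl,
      sum_const, card_range, smul_eq_mul]
  _ = ∑ x ∈ P, ∑ s ∈ range n, w (σ s x) := sum_comm
  _ = j * #P := by rw [sum_congr rfl hw, sum_const, smul_eq_mul, mul_comm]

lemma Nat.card_subtype_prod_eq_sum {α β : Type*} (s : Finset α) (t : Finset β)
    (r : α → β → Prop) [∀ a, DecidablePred (r a)] :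
    Nat.card {p : α × β // p.1 ∈ s ∧ p.2 ∈ t ∧ r p.1 p.2} = ∑ a ∈ s, #{b ∈ t | r a b} := by
  rw [Nat.subtype_card ((s ×ˢ t).filter fun p => r p.1 p.2) (by simp [and_assoc]),
    card_filter, sum_product]
  exact sum_congr rfl fun a _ => (card_filter _ _).symm

lemma sum_card_levels_rotate_eq {n k j : ℕ} [NeZero n] [NeZero (k * n)]
    {f : Fin (k * n) → ℤ} (hf : #{t | f t = 1} = n + j) :
    ∑ s ∈ range n, #{i ∈ Icc 1 j | ∀ q ∈ Ioo (0 : ℕ) n,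
      ((i : ℕ) : ℤ) ≤ blockExcess k (rotate ((k * s : ℕ) : Fin (k * n)) f) q} = j := by
  simp_rw [blockExcess_rotate, le_sub_iff_add_le']
  exact cycle_lemma (blockExcess_add_period hf)

theorem stmt_10_general (n k j : ℕ) (hn : 1 ≤ n) (hk : 2 ≤ k) :
    n * Nat.card {p : (Fin (k * n) → ℤ) × ℕ //
        IsPathPJ n k j p.1 ∧ 1 ≤ p.2 ∧ p.2 ≤ j ∧
        ∀ m : ℕ, 0 < m → m < k * n → k ∣ m →
          ((k * n : ℕ) : ℤ) * (pathSum p.1 m - 2 * ((p.2 : ℤ) - 1)) >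
            (m : ℤ) * (2 - ((k : ℤ) - 2) * (n : ℤ))} =
      j * Nat.choose (k * n) (n + j) := by
  have : NeZero n := ⟨by omega⟩
  have : NeZero (k * n) := ⟨by positivity⟩
  have hrotate (s : ℕ) (f : Fin (k * n) → ℤ) :
      rotate ((k * s : ℕ) : Fin (k * n)) f ∈ upDownPaths (k * n) (n + j) ↔
        f ∈ upDownPaths (k * n) (n + j) :=
    comp_mem_upDownPaths_iff (u := n + j) (f := f) (Equiv.addRight ((k * s : ℕ) : Fin (k * n)))
  rw [← card_upDownPaths, ← mul_sum_eq_mul_card_of_sum_perm_eq _ _ hrotate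
    (fun f => #{i ∈ Icc 1 j | ∀ q ∈ Ioo (0 : ℕ) n, ((i : ℕ) : ℤ) ≤ blockExcess k f q})
    fun f hf => sum_card_levels_rotate_eq (mem_upDownPaths.1 hf).2,
    ← Nat.card_subtype_prod_eq_sum]
  congr 1
  refine Nat.card_congr (Equiv.subtypeEquivRight fun p => ?_)
  rw [IsPathPJ, ← mem_upDownPaths, mem_Icc, and_assoc]
  exact and_congr_right fun hf => and_congr_right fun _ => and_congr_right fun _ =>
    baseline_condition_iff (mem_upDownPaths.1 hf).1 p.2

/-- Main Theorem: `n` times the number of pairs `(f, i)` with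
`f ∈ 𝒫_{n,k,j}`, `1 ≤ i ≤ j`, and every interior k-divisible point of `f` strictly
above the baseline for `(f, i)` (i.e. `kn·(S(f,m) − 2(i−1)) > m·(2−(k−2)n)` for every
`m` with `0 < m < kn` and `k ∣ m`), equals `j·C(kn, n+j)`. -/
theorem stmt_10 (n k j : ℕ) (hn : 1 ≤ n) (hk : 2 ≤ k) (hj : 1 ≤ j)
    (hnj : n + j ≤ k * n) :
    n * Nat.card {p : (Fin (k * n) → ℤ) × ℕ //
        IsPathPJ n k j p.1 ∧ 1 ≤ p.2 ∧ p.2 ≤ j ∧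
        ∀ m : ℕ, 0 < m → m < k * n → k ∣ m →
          ((k * n : ℕ) : ℤ) * (pathSum p.1 m - 2 * ((p.2 : ℤ) - 1)) >
            (m : ℤ) * (2 - ((k : ℤ) - 2) * (n : ℤ))} =
      j * Nat.choose (k * n) (n + j) :=
  stmt_10_general n k j hn hk
end

section
/- Let n ≥ 1, k ≥ 2 and j ≥ 1 be integers, and consider the set 𝒫*_{n,k,j} of marked paths: pairs (g, p) where g is a lattice path of n east steps (1,0) and (k−1)n + j north steps (0,1) starting at the origin, and p is one of the j high points of g (the first high point is the leftmost point of g maximizing the height y − (k−1)x above the line y = (k−1)x; the second high point is the leftmost point among those of next highest height; and so on, for j high points in total). Let X(g, p) be the label of p when the kn+j+1 points of g are labeled 0, 1, …, kn+j in order from the origin. Then X is uniformly distributed over {1, 2, …, kn+j}: for every ℓ with 1 ≤ ℓ ≤ kn+j, the number of marked paths (g, p) with X(g, p) = ℓ, multiplied by (kn+j), equals j·C(kn+j, n). -/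
/-- The number of east steps (value `true`) among the first `m` steps of `g`. -/
def eastCount {N : ℕ} (g : Fin N → Bool) (m : ℕ) : ℕ :=
  (Finset.univ.filter (fun t : Fin N => (t : ℕ) < m ∧ g t = true)).card

/-- The number of north steps (value `false`) among the first `m` steps of `g`. -/
def northCount {N : ℕ} (g : Fin N → Bool) (m : ℕ) : ℕ :=
  (Finset.univ.filter (fun t : Fin N => (t : ℕ) < m ∧ g t = false)).card

/-- The height of point `m` of the path `g` above the line `y = (k−1)x`:
`y − (k−1)x` where `(x, y)` is the point reached after the first `m` steps. -/
def height (k : ℕ) {N : ℕ} (g : Fin N → Bool) (m : ℕ) : ℤ :=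
  (northCount g m : ℤ) - ((k : ℤ) - 1) * (eastCount g m : ℤ)

/-- `p` is one of the `j` high points of the path `g` (whose points are labeled
`0, …, N`): the first high point is the leftmost of the highest points, the second is
the leftmost of the points of the next highest height, and so on.  Equivalently, `p` is
the leftmost point at its height and fewer than `j` distinct height values occur on the
path above the height of `p`. -/
def IsHighPoint (k j : ℕ) {N : ℕ} (g : Fin N → Bool) (p : ℕ) : Prop :=
  p ≤ N ∧ (∀ q < p, height k g q ≠ height k g p) ∧
    (((Finset.range (N + 1)).image (fun q => height k g q)).filter
      (fun h => h > height k g p)).card < j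

lemma count_step {N : ℕ} (P : Fin N → Prop) [DecidablePred P] (m : ℕ) :
    (Finset.univ.filter (fun t : Fin N => (t : ℕ) < m + 1 ∧ P t)).card =
    (Finset.univ.filter (fun t : Fin N => (t : ℕ) < m ∧ P t)).card +
      (if h : m < N then (if P ⟨m, h⟩ then 1 else 0) else 0) := by
  by_cases h : m < N
  · simp only [dif_pos h]
    by_cases hP : P ⟨m, h⟩
    · rw [if_pos hP]
      have : (Finset.univ.filter (fun t : Fin N => (t : ℕ) < m + 1 ∧ P t)) =
          insert ⟨m, h⟩ (Finset.univ.filter (fun t : Fin N => (t : ℕ) < m ∧ P t)) := by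
        ext t
        simp only [Finset.mem_filter, Finset.mem_univ, true_and, Finset.mem_insert]
        constructor
        · rintro ⟨h1, h2⟩
          rcases Nat.lt_succ_iff_lt_or_eq.mp h1 with h1 | h1
          · exact Or.inr ⟨h1, h2⟩
          · exact Or.inl (Fin.ext h1)
        · rintro (rfl | ⟨h1, h2⟩)
          · exact ⟨Nat.lt_succ_self m, hP⟩
          · exact ⟨Nat.lt_succ_of_lt h1, h2⟩
      rw [this, Finset.card_insert_of_notMem (by simp)]
    · rw [if_neg hP]
      have : (Finset.univ.filter (fun t : Fin N => (t : ℕ) < m + 1 ∧ P t)) =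
          (Finset.univ.filter (fun t : Fin N => (t : ℕ) < m ∧ P t)) := by
        ext t
        simp only [Finset.mem_filter, Finset.mem_univ, true_and]
        constructor
        · rintro ⟨h1, h2⟩
          refine ⟨?_, h2⟩
          rcases Nat.lt_succ_iff_lt_or_eq.mp h1 with h1 | h1
          · exact h1
          · exact absurd h2 (by rwa [show t = ⟨m, h⟩ from Fin.ext h1] at h2 ⊢)
        · rintro ⟨h1, h2⟩
          exact ⟨Nat.lt_succ_of_lt h1, h2⟩
      rw [this]; omega
  · simp only [dif_neg h]
    have : (Finset.univ.filter (fun t : Fin N => (t : ℕ) < m + 1 ∧ P t)) =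
        (Finset.univ.filter (fun t : Fin N => (t : ℕ) < m ∧ P t)) := by
      ext t
      have := t.isLt
      simp only [Finset.mem_filter, Finset.mem_univ, true_and]
      constructor
      · rintro ⟨h1, h2⟩; exact ⟨by omega, h2⟩
      · rintro ⟨h1, h2⟩; exact ⟨by omega, h2⟩
    rw [this]; omega

lemma eastCount_zero {N : ℕ} (g : Fin N → Bool) : eastCount g 0 = 0 := by
  simp [eastCount]

lemma eastCount_succ {N : ℕ} (g : Fin N → Bool) (m : ℕ) :
    eastCount g (m + 1) = eastCount g m +
      (if h : m < N then (if g ⟨m, h⟩ = true then 1 else 0) else 0) :=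
  count_step (fun t => g t = true) m

lemma northCount_succ {N : ℕ} (g : Fin N → Bool) (m : ℕ) :
    northCount g (m + 1) = northCount g m +
      (if h : m < N then (if g ⟨m, h⟩ = false then 1 else 0) else 0) :=
  count_step (fun t => g t = false) m

lemma count_add {N : ℕ} (g : Fin N → Bool) (m : ℕ) (hm : m ≤ N) :
    eastCount g m + northCount g m = m := by
  induction m with
  | zero => simp [eastCount, northCount]
  | succ m ih =>
    have hmN : m < N := hm
    rw [eastCount_succ, northCount_succ, dif_pos hmN, dif_pos hmN]
    have := ih (le_of_lt hmN)
    cases hgm : g ⟨m, hmN⟩ <;> simp [hgm] <;> omega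

lemma height_eq {N : ℕ} (k : ℕ) (g : Fin N → Bool) (m : ℕ) (hm : m ≤ N) :
    height k g m = (m : ℤ) - (k : ℤ) * (eastCount g m : ℤ) := by
  have := count_add g m hm
  rw [height]
  have : (northCount g m : ℤ) = (m : ℤ) - (eastCount g m : ℤ) := by omega
  rw [this]; ring

lemma height_zero {N : ℕ} (k : ℕ) (g : Fin N → Bool) : height k g 0 = 0 := by
  simp [height, northCount, eastCount]

lemma height_succ_le {N : ℕ} (k : ℕ) (hk : 1 ≤ k) (g : Fin N → Bool) (m : ℕ) (hm : m < N) :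
    height k g (m + 1) ≤ height k g m + 1 := by
  rw [height_eq k g (m+1) hm, height_eq k g m (le_of_lt hm)]
  have h1 := eastCount_succ g m
  rw [dif_pos hm] at h1
  have hk' : (1 : ℤ) ≤ (k : ℤ) := by exact_mod_cast hk
  cases hgm : g ⟨m, hm⟩ <;> rw [hgm] at h1 <;> simp at h1 <;> push_cast [h1] <;> nlinarith

lemma height_IVT {N : ℕ} (k : ℕ) (hk : 1 ≤ k) (g : Fin N → Bool) (h : ℤ) :
    ∀ a b : ℕ, a ≤ b → b ≤ N → height k g a ≤ h → h ≤ height k g b →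
      ∃ m, a ≤ m ∧ m ≤ b ∧ height k g m = h := by
  intro a b hab
  induction b, hab using Nat.le_induction with
  | base => intro _ h1 h2; exact ⟨a, le_refl a, le_refl a, le_antisymm h1 h2⟩
  | succ b hab ih =>
    intro hbN h1 h2
    by_cases hc : h ≤ height k g b
    · obtain ⟨m, hm1, hm2, hm3⟩ := ih (by omega) h1 hc
      exact ⟨m, hm1, by omega, hm3⟩
    · push_neg at hc
      have := height_succ_le k hk g b (by omega)
      exact ⟨b + 1, by omega, le_refl _, by omega⟩

noncomputable def maxH (k : ℕ) {N : ℕ} (g : Fin N → Bool) : ℤ :=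
  ((Finset.range (N + 1)).image (fun q => height k g q)).max'
    ⟨height k g 0, Finset.mem_image_of_mem _ (Finset.mem_range.mpr (Nat.succ_pos N))⟩

lemma le_maxH {N : ℕ} (k : ℕ) (g : Fin N → Bool) (m : ℕ) (hm : m ≤ N) :
    height k g m ≤ maxH k g :=
  Finset.le_max' _ _ (Finset.mem_image_of_mem _ (Finset.mem_range.mpr (by omega)))

lemma exists_maxH {N : ℕ} (k : ℕ) (g : Fin N → Bool) :
    ∃ m, m ≤ N ∧ height k g m = maxH k g := by
  have := Finset.max'_mem ((Finset.range (N + 1)).image (fun q => height k g q))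
    ⟨height k g 0, Finset.mem_image_of_mem _ (Finset.mem_range.mpr (Nat.succ_pos N))⟩
  rw [Finset.mem_image] at this
  obtain ⟨m, hm, hm2⟩ := this
  exact ⟨m, by have := Finset.mem_range.mp hm; omega, hm2⟩

lemma j_le_maxH {N : ℕ} (k j : ℕ) (g : Fin N → Bool) (hgN : height k g N = j) :
    (j : ℤ) ≤ maxH k g := hgN ▸ le_maxH k g N le_rfl

lemma exists_argmax_pos {N : ℕ} (k j : ℕ) (hj : 1 ≤ j) (g : Fin N → Bool)
    (hgN : height k g N = j) :
    ∃ m, 1 ≤ m ∧ m ≤ N ∧ height k g m = maxH k g := by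
  obtain ⟨m, hm, hm2⟩ := exists_maxH k g
  rcases Nat.eq_zero_or_pos m with rfl | hpos
  · rw [height_zero] at hm2
    have := j_le_maxH k j g hgN
    omega
  · exact ⟨m, hpos, hm, hm2⟩

lemma highPoint_iff {N : ℕ} (k j : ℕ) (hk : 1 ≤ k) (hj : 1 ≤ j) (g : Fin N → Bool)
    (hgN : height k g N = j) (p : ℕ) :
    IsHighPoint k j g p ↔
      p ≤ N ∧ (∀ q < p, height k g q ≠ height k g p) ∧ maxH k g - j < height k g p := by
  obtain ⟨m₀, hm₀N, hm₀⟩ := exists_maxH k g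
  have hMj := j_le_maxH k j g hgN
  by_cases h0 : 0 ≤ height k g p
  · have hfe : (((Finset.range (N + 1)).image (fun q => height k g q)).filter
        (fun h => h > height k g p)) = Finset.Icc (height k g p + 1) (maxH k g) := by
      ext h
      simp only [Finset.mem_filter, Finset.mem_image, Finset.mem_range, Finset.mem_Icc]
      constructor
      · rintro ⟨⟨q, hq, rfl⟩, hgt⟩
        exact ⟨by omega, le_maxH k g q (by omega)⟩
      · rintro ⟨h1, h2⟩
        obtain ⟨q, _, hq2, hq3⟩ := height_IVT k hk g h 0 m₀ (Nat.zero_le _) hm₀N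
          (by rw [height_zero]; omega) (by omega)
        exact ⟨⟨q, by omega, hq3⟩, by omega⟩
    rw [IsHighPoint, hfe, Int.card_Icc]
    constructor
    · rintro ⟨h1, h2, h3⟩; exact ⟨h1, h2, by omega⟩
    · rintro ⟨h1, h2, h3⟩; exact ⟨h1, h2, by omega⟩
  · push_neg at h0
    have hsub : Finset.Icc (0 : ℤ) (maxH k g) ⊆
        (((Finset.range (N + 1)).image (fun q => height k g q)).filter
        (fun h => h > height k g p)) := by
      intro h hh
      rw [Finset.mem_Icc] at hh
      obtain ⟨q, _, hq2, hq3⟩ := height_IVT k hk g h 0 m₀ (Nat.zero_le _) hm₀N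
        (by rw [height_zero]; omega) (by omega)
      simp only [Finset.mem_filter, Finset.mem_image, Finset.mem_range]
      exact ⟨⟨q, by omega, hq3⟩, by omega⟩
    have hcard := Finset.card_le_card hsub
    rw [Int.card_Icc] at hcard
    constructor
    · rintro ⟨_, _, h3⟩; omega
    · rintro ⟨_, _, h3⟩; omega

lemma not_highPoint_zero {N : ℕ} (k j : ℕ) (hk : 1 ≤ k) (hj : 1 ≤ j) (g : Fin N → Bool)
    (hgN : height k g N = j) : ¬ IsHighPoint k j g 0 := by
  rw [highPoint_iff k j hk hj g hgN]
  rintro ⟨-, -, h3⟩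
  rw [height_zero] at h3
  have := j_le_maxH k j g hgN
  omega

open scoped Classical in
lemma card_highPoints {N : ℕ} (k j : ℕ) (hk : 1 ≤ k) (hj : 1 ≤ j) (g : Fin N → Bool)
    (hgN : height k g N = j) :
    ((Finset.Icc 1 N).filter (fun p => IsHighPoint k j g p)).card = j := by
  obtain ⟨m₀, hm₀N, hm₀⟩ := exists_maxH k g
  have hMj := j_le_maxH k j g hgN
  have key : ((Finset.Icc 1 N).filter (fun p => IsHighPoint k j g p)).card =
      (Finset.Ioc (maxH k g - j) (maxH k g)).card := by
    apply Finset.card_bij (fun p _ => height k g p)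
    · intro p hp
      rw [Finset.mem_filter, highPoint_iff k j hk hj g hgN] at hp
      rw [Finset.mem_Ioc]
      exact ⟨by have := hp.2.2.2; omega, le_maxH k g p hp.2.1⟩
    · intro p₁ hp₁ p₂ hp₂ heq
      rw [Finset.mem_filter, highPoint_iff k j hk hj g hgN] at hp₁ hp₂
      rcases lt_trichotomy p₁ p₂ with h | h | h
      · exact absurd heq (hp₂.2.2.1 p₁ h)
      · exact h
      · exact absurd heq.symm (hp₁.2.2.1 p₂ h)
    · intro h hh
      rw [Finset.mem_Ioc] at hh
      have hex : ∃ m, height k g m = h := by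
        obtain ⟨q, -, hq2, hq3⟩ := height_IVT k hk g h 0 m₀ (Nat.zero_le _) hm₀N
          (by rw [height_zero]; omega) (by omega)
        exact ⟨q, hq3⟩
      set p := Nat.find hex with hp
      have hph : height k g p = h := Nat.find_spec hex
      have hmin : ∀ q < p, height k g q ≠ h := fun q hq => Nat.find_min hex hq
      have hpN : p ≤ N := by
        obtain ⟨q, -, hq2, hq3⟩ := height_IVT k hk g h 0 m₀ (Nat.zero_le _) hm₀N
          (by rw [height_zero]; omega) (by omega)
        exact le_trans (Nat.find_min' hex hq3) (le_trans hq2 hm₀N)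
      have hp1 : 1 ≤ p := by
        rcases Nat.eq_zero_or_pos p with h0 | h0
        · rw [h0, height_zero] at hph; omega
        · exact h0
      refine ⟨p, Finset.mem_filter.mpr ⟨Finset.mem_Icc.mpr ⟨hp1, hpN⟩, ?_⟩, hph⟩
      rw [highPoint_iff k j hk hj g hgN]
      exact ⟨hpN, fun q hq => hph ▸ hmin q hq, by omega⟩
  rw [key, Int.card_Ioc]
  omega

def rot {N : ℕ} (g : Fin N → Bool) : Fin N → Bool :=
  fun t => g ⟨(t.val + 1) % N, Nat.mod_lt _ t.pos⟩

def unrot {N : ℕ} (g : Fin N → Bool) : Fin N → Bool :=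
  fun t => g ⟨(t.val + (N - 1)) % N, Nat.mod_lt _ t.pos⟩

lemma mod1 (N a : ℕ) (ha : a < N) : ((a + 1) % N + (N - 1)) % N = a := by
  rcases Nat.lt_or_ge (a + 1) N with h | h
  · rw [Nat.mod_eq_of_lt h, show a + 1 + (N - 1) = N + a by omega, Nat.add_mod_left,
      Nat.mod_eq_of_lt ha]
  · have haN : a + 1 = N := by omega
    rw [haN, Nat.mod_self, Nat.zero_add, Nat.mod_eq_of_lt (by omega)]
    omega

lemma mod2 (N a : ℕ) (ha : a < N) : ((a + (N - 1)) % N + 1) % N = a := by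
  rcases Nat.eq_zero_or_pos a with rfl | h
  · have h1 : (0 + (N - 1)) % N = N - 1 := by
      rw [Nat.zero_add]; exact Nat.mod_eq_of_lt (by omega)
    rw [h1, show N - 1 + 1 = N by omega, Nat.mod_self]
  · have h1 : (a + (N - 1)) % N = a - 1 := by
      rw [show a + (N - 1) = N + (a - 1) by omega, Nat.add_mod_left]
      exact Nat.mod_eq_of_lt (by omega)
    rw [h1, show a - 1 + 1 = a by omega]
    exact Nat.mod_eq_of_lt ha

lemma rot_unrot {N : ℕ} (g : Fin N → Bool) : rot (unrot g) = g := by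
  funext t
  simp only [rot, unrot]
  congr 1
  exact Fin.ext (mod1 N t.val t.isLt)

lemma unrot_rot {N : ℕ} (g : Fin N → Bool) : unrot (rot g) = g := by
  funext t
  simp only [rot, unrot]
  congr 1
  exact Fin.ext (mod2 N t.val t.isLt)

lemma eastCount_rot {N : ℕ} (g : Fin N → Bool) (m : ℕ) (hm : m + 1 ≤ N) :
    eastCount (rot g) m + eastCount g 1 = eastCount g (m + 1) := by
  induction m with
  | zero => simp [eastCount_zero]
  | succ m ih =>
    have h1 : m < N := by omega
    have h2 : m + 1 < N := by omega
    rw [eastCount_succ (rot g) m, dif_pos h1, eastCount_succ g (m + 1), dif_pos h2,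
      ← ih (by omega)]
    have : rot g ⟨m, h1⟩ = g ⟨m + 1, h2⟩ := by
      simp only [rot]
      congr 1
      exact Fin.ext (Nat.mod_eq_of_lt h2)
    rw [this]
    ring

lemma eastCount_total {N : ℕ} (g : Fin N → Bool) :
    eastCount g N = (Finset.univ.filter (fun t : Fin N => g t = true)).card := by
  unfold eastCount
  congr 1
  ext t
  simp [t.isLt]

lemma eastCount_rot_N {N : ℕ} (g : Fin N → Bool) :
    eastCount (rot g) N = eastCount g N := by
  rw [eastCount_total, eastCount_total]
  apply Finset.card_bij' (fun t _ => (⟨(t.val + 1) % N, Nat.mod_lt _ t.pos⟩ : Fin N))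
    (fun t _ => (⟨(t.val + (N - 1)) % N, Nat.mod_lt _ t.pos⟩ : Fin N))
  · intro t ht
    rw [Finset.mem_filter] at ht ⊢
    exact ⟨Finset.mem_univ _, ht.2⟩
  · intro t ht
    rw [Finset.mem_filter] at ht ⊢
    refine ⟨Finset.mem_univ _, ?_⟩
    have : rot g ⟨(t.val + (N - 1)) % N, Nat.mod_lt _ t.pos⟩ = g t := by
      simp only [rot]
      congr 1
      exact Fin.ext (mod2 N t.val t.isLt)
    rw [this]
    exact ht.2
  · intro t _
    exact Fin.ext (mod1 N t.val t.isLt)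
  · intro t _
    exact Fin.ext (mod2 N t.val t.isLt)

lemma height_rot {N : ℕ} (k : ℕ) (g : Fin N → Bool) (m : ℕ) (hm : m + 1 ≤ N) :
    height k (rot g) m + height k g 1 = height k g (m + 1) := by
  rw [height_eq k (rot g) m (by omega), height_eq k g 1 (by omega),
    height_eq k g (m + 1) hm]
  have h := eastCount_rot g m hm
  have h' : (eastCount (rot g) m : ℤ) + (eastCount g 1 : ℤ) = (eastCount g (m + 1) : ℤ) := by
    exact_mod_cast h
  push_cast
  linear_combination (-(k : ℤ)) * h'

lemma height_rot_N {N : ℕ} (k : ℕ) (g : Fin N → Bool) :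
    height k (rot g) N = height k g N := by
  rcases Nat.eq_zero_or_pos N with rfl | hN
  · simp [height, eastCount, northCount]
  · rw [height_eq k (rot g) N le_rfl, height_eq k g N le_rfl, eastCount_rot_N]

lemma maxH_rot_le {N : ℕ} (k j : ℕ) (g : Fin N → Bool) (hgN : height k g N = j) :
    maxH k (rot g) ≤ max (maxH k g - height k g 1) j := by
  apply Finset.max'_le
  intro y hy
  rw [Finset.mem_image] at hy
  obtain ⟨m, hm, rfl⟩ := hy
  have hmN : m ≤ N := by have := Finset.mem_range.mp hm; omega
  rcases Nat.lt_or_ge m N with h | h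
  · have := height_rot k g m (by omega)
    have := le_maxH k g (m + 1) (by omega)
    have hle : height k (rot g) m ≤ maxH k g - height k g 1 := by omega
    exact le_trans hle (le_max_left _ _)
  · have hmeq : m = N := by omega
    rw [hmeq, height_rot_N, hgN]
    exact le_max_right _ _

lemma maxH_rot_ge1 {N : ℕ} (k j : ℕ) (hj : 1 ≤ j) (g : Fin N → Bool)
    (hgN : height k g N = j) :
    maxH k g - height k g 1 ≤ maxH k (rot g) := by
  obtain ⟨m₀, hm1, hm2, hm3⟩ := exists_argmax_pos k j hj g hgN
  have heq := height_rot k g (m₀ - 1) (by omega)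
  rw [show m₀ - 1 + 1 = m₀ by omega] at heq
  have := le_maxH k (rot g) (m₀ - 1) (by omega)
  omega

lemma highPoint_rot {N : ℕ} (k j : ℕ) (hk : 1 ≤ k) (hj : 1 ≤ j) (g : Fin N → Bool)
    (hgN : height k g N = j) (p : ℕ) (hp1 : 1 ≤ p) (hp2 : p + 1 ≤ N) :
    IsHighPoint k j g (p + 1) ↔ IsHighPoint k j (rot g) p := by
  have hgN' : height k (rot g) N = j := by rw [height_rot_N, hgN]
  have hMj := j_le_maxH k j g hgN
  have hM'j := j_le_maxH k j (rot g) hgN'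
  have hM'ge := maxH_rot_ge1 k j hj g hgN
  have hM'le : maxH k (rot g) ≤ maxH k g - height k g 1 ∨ maxH k (rot g) ≤ (j : ℤ) :=
    le_max_iff.mp (maxH_rot_le k j g hgN)
  have hc : height k g 1 ≤ 1 := by
    rw [height_eq k g 1 (by omega)]
    have h0' : (0 : ℤ) ≤ (eastCount g 1 : ℤ) := Int.natCast_nonneg _
    have hk' : (0 : ℤ) ≤ (k : ℤ) := Int.natCast_nonneg _
    have hprod : (0 : ℤ) ≤ (k : ℤ) * (eastCount g 1 : ℤ) := mul_nonneg hk' h0'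
    push_cast
    linarith
  have hH'p : height k (rot g) p = height k g (p + 1) - height k g 1 := by
    have := height_rot k g p hp2; omega
  have hH'q : ∀ q, q + 1 ≤ N →
      height k (rot g) q = height k g (q + 1) - height k g 1 := by
    intro q hq; have := height_rot k g q hq; omega
  rw [highPoint_iff k j hk hj g hgN, highPoint_iff k j hk hj (rot g) hgN']
  constructor
  · rintro ⟨-, h2, h3⟩
    have hne1 : height k g 1 ≠ height k g (p + 1) := h2 1 (by omega)
    refine ⟨by omega, ?_, ?_⟩
    · intro q hq
      rw [hH'q q (by omega), hH'p]
      have := h2 (q + 1) (by omega)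
      omega
    · rw [hH'p]
      omega
  · rintro ⟨h1, h2, h3⟩
    rw [hH'p] at h3
    have hht : maxH k g - j < height k g (p + 1) := by omega
    refine ⟨by omega, ?_, hht⟩
    intro q hq
    rcases Nat.eq_zero_or_pos q with rfl | hq0
    · rw [height_zero]
      omega
    · have hq' := h2 (q - 1) (by omega)
      rw [hH'q (q - 1) (by omega), hH'p, show q - 1 + 1 = q by omega] at hq'
      omega

lemma card_paths (N n : ℕ) : (Finset.univ.filter (fun g : Fin N → Bool =>
    (Finset.univ.filter (fun t => g t = true)).card = n)).card = Nat.choose N n := by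
  have h := Finset.card_powersetCard n (Finset.univ : Finset (Fin N))
  rw [Finset.card_univ, Fintype.card_fin] at h
  rw [← h]
  refine Finset.card_bij' (fun g _ => Finset.univ.filter (fun t => g t = true))
    (fun s _ => fun t => decide (t ∈ s)) ?_ ?_ ?_ ?_
  · intro g hg
    rw [Finset.mem_filter] at hg
    rw [Finset.mem_powersetCard]
    exact ⟨Finset.subset_univ _, hg.2⟩
  · intro s hs
    rw [Finset.mem_powersetCard] at hs
    rw [Finset.mem_filter]
    refine ⟨Finset.mem_univ _, ?_⟩
    show (Finset.filter (fun t => decide (t ∈ s) = true) Finset.univ).card = n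
    have heq : Finset.filter (fun t => decide (t ∈ s) = true) Finset.univ = s := by
      ext t; simp
    rw [heq]
    exact hs.2
  · intro g _
    funext t
    simp
  · intro s _
    ext t
    simp

/-- for marked paths `(g, p)` — `g` a lattice path of `n` east and
`(k−1)n + j` north steps, `p` one of its `j` high points — the statistic
`X(g, p) = p` (the label of the marked point) is uniformly distributed over
`{1, …, kn+j}`: for every `ℓ` with `1 ≤ ℓ ≤ kn+j`, the number of marked paths with
`X = ℓ`, multiplied by `kn+j`, equals `j·C(kn+j, n)`. -/
theorem stmt_14 (n k j : ℕ) (hn : 1 ≤ n) (hk : 2 ≤ k) (hj : 1 ≤ j)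
    (l : ℕ) (hl1 : 1 ≤ l) (hl2 : l ≤ k * n + j) :
    (k * n + j) * Nat.card {gp : (Fin (k * n + j) → Bool) × ℕ //
        (Finset.univ.filter (fun t : Fin (k * n + j) => gp.1 t = true)).card = n ∧
        IsHighPoint k j gp.1 gp.2 ∧ gp.2 = l} =
      j * Nat.choose (k * n + j) n := by
  classical
  set N := k * n + j with hNdef
  have hk1 : 1 ≤ k := by omega
  set P : (Fin N → Bool) → Prop :=
    fun g => (Finset.univ.filter (fun t => g t = true)).card = n with hPdef
  have hPeast : ∀ g : Fin N → Bool, P g → eastCount g N = n := by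
    intro g hg
    rw [eastCount_total]
    exact hg
  have hPheight : ∀ g : Fin N → Bool, P g → height k g N = j := by
    intro g hg
    rw [height_eq k g N le_rfl, hPeast g hg]
    have : (N : ℤ) = (k : ℤ) * n + j := by rw [hNdef]; push_cast; ring
    omega
  set F : ℕ → ℕ := fun m =>
    (Finset.univ.filter (fun g : Fin N → Bool => P g ∧ IsHighPoint k j g m)).card with hFdef
  -- Step A : Nat.card of the subtype is F l
  have hA : Nat.card {gp : (Fin N → Bool) × ℕ //
      (Finset.univ.filter (fun t : Fin N => gp.1 t = true)).card = n ∧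
      IsHighPoint k j gp.1 gp.2 ∧ gp.2 = l} = F l := by
    have e : {gp : (Fin N → Bool) × ℕ //
        (Finset.univ.filter (fun t : Fin N => gp.1 t = true)).card = n ∧
        IsHighPoint k j gp.1 gp.2 ∧ gp.2 = l} ≃
        {g : Fin N → Bool // P g ∧ IsHighPoint k j g l} :=
      { toFun := fun x => ⟨x.1.1, x.2.1, by have h := x.2.2.1; rwa [x.2.2.2] at h⟩
        invFun := fun x => ⟨(x.1, l), x.2.1, x.2.2, rfl⟩
        left_inv := by
          rintro ⟨⟨g, p⟩, hgp⟩
          have : p = l := hgp.2.2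
          subst this
          rfl
        right_inv := fun x => rfl }
    rw [Nat.card_congr e, Nat.card_eq_fintype_card, Fintype.card_subtype]
  -- Step B : rotation bijection between fibers
  have hB : ∀ m, 1 ≤ m → m + 1 ≤ N → F (m + 1) = F m := by
    intro m hm1 hm2
    rw [hFdef]
    refine Finset.card_bij' (fun g _ => rot g) (fun g _ => unrot g) ?_ ?_ ?_ ?_
    · intro g hg
      rw [Finset.mem_filter] at hg ⊢
      have hP := hg.2.1
      have hHP := hg.2.2
      have hProt : P (rot g) := by
        show (Finset.filter (fun t => rot g t = true) Finset.univ).card = n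
        have h1 : eastCount (rot g) N = eastCount g N := eastCount_rot_N g
        rw [eastCount_total, eastCount_total] at h1
        rw [h1]
        exact hP
      exact ⟨Finset.mem_univ _,  hProt,
        (highPoint_rot k j hk1 hj g (hPheight g hP) m hm1 hm2).mp hHP⟩
    · intro g hg
      rw [Finset.mem_filter] at hg ⊢
      have hP := hg.2.1
      have hHP := hg.2.2
      have hPun : P (unrot g) := by
        show (Finset.filter (fun t => unrot g t = true) Finset.univ).card = n
        have h1 : eastCount (rot (unrot g)) N = eastCount (unrot g) N := eastCount_rot_N _
        rw [rot_unrot] at h1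
        rw [eastCount_total, eastCount_total] at h1
        rw [← h1]
        exact hP
      refine ⟨Finset.mem_univ _, hPun, ?_⟩
      apply (highPoint_rot k j hk1 hj (unrot g) (hPheight _ hPun) m hm1 hm2).mpr
      rw [rot_unrot]
      exact hHP
    · intro g _
      exact unrot_rot g
    · intro g _
      exact rot_unrot g
  -- Step C : all fibers equal F 1
  have hC : ∀ m, 1 ≤ m → m ≤ N → F m = F 1 := by
    intro m hm1
    induction m, hm1 using Nat.le_induction with
    | base => intro _; rfl
    | succ m hm ih =>
      intro hmN
      rw [hB m hm hmN]
      exact ih (by omega)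
  -- Step D : sum of fibers
  have hD : ∑ m ∈ Finset.Icc 1 N, F m = j * Nat.choose N n := by
    have hF2 : ∀ m, F m =
        ∑ g ∈ Finset.univ.filter P, (if IsHighPoint k j g m then 1 else 0) := by
      intro m
      rw [hFdef, ← Finset.card_filter, Finset.filter_filter]
    calc ∑ m ∈ Finset.Icc 1 N, F m
        = ∑ m ∈ Finset.Icc 1 N, ∑ g ∈ Finset.univ.filter P,
            (if IsHighPoint k j g m then 1 else 0) := by
          exact Finset.sum_congr rfl fun m _ => hF2 m
      _ = ∑ g ∈ Finset.univ.filter P, ∑ m ∈ Finset.Icc 1 N,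
            (if IsHighPoint k j g m then 1 else 0) := Finset.sum_comm
      _ = ∑ g ∈ Finset.univ.filter P, j := by
          apply Finset.sum_congr rfl
          intro g hg
          rw [← Finset.card_filter]
          exact card_highPoints k j hk1 hj g
            (hPheight g (Finset.mem_filter.mp hg).2)
      _ = j * Nat.choose N n := by
          rw [Finset.sum_const, smul_eq_mul, mul_comm]
          congr 1
          exact card_paths N n
  -- Step E : combine
  rw [hA]
  have hsum : ∑ m ∈ Finset.Icc 1 N, F m = N * F l := by
    have : ∀ m ∈ Finset.Icc 1 N, F m = F l := by
      intro m hm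
      rw [Finset.mem_Icc] at hm
      rw [hC m hm.1 hm.2, ← hC l hl1 hl2]
    rw [Finset.sum_congr rfl this, Finset.sum_const, smul_eq_mul, Nat.card_Icc,
      show N + 1 - 1 = N from rfl]
  rw [← hsum, hD]
end
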